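/- arXiv:2204.09756 — 9 statements merged into one kernel-verified Lean document; each statement's English description precedes it below -/
import Mathlib

section
/- Let W = [W_{ij}] be a symmetric N×N block real matrix and define the block Cholesky recursion Ŵ_{ij} = W_{ij} − Σ_{k=1}^{j−1} Ŵ_{ik} Ŵ_{kk}⁻¹ Ŵ_{jk}ᵀ for 1 ≤ j ≤ i ≤ N. Suppose all diagonal pivots Ŵ_{kk} (k = 1,…,N) are positive definite (in particular this holds when W ≻ 0), and suppose there is a function c : {1,…,N} → {1,…,N} with c(i) ≤ i such that W_{ij} = 0 whenever j < c(i). Then Ŵ_{ij} = 0 for all j < c(i) with j ≤ i; consequently, for every j ≤ i, Ŵ_{ij} = W_{ij} − Σ_{k=max(c(i),c(j))}^{j−1} Ŵ_{ik} Ŵ_{kk}⁻¹ Ŵ_{jk}ᵀ. -/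
open Matrix

/-- The full matrix assembled from an `N × N` family of blocks
(`W i j` is the `(i,j)`-th block, of size `n i × n j`). -/
def ofBlocks {N : ℕ} {n : Fin N → ℕ}
    (W : ∀ i j : Fin N, Matrix (Fin (n i)) (Fin (n j)) ℝ) :
    Matrix ((i : Fin N) × Fin (n i)) ((j : Fin N) × Fin (n j)) ℝ :=
  Matrix.of fun a b => W a.1 b.1 a.2 b.2

/-- The block Cholesky recursion:
`Ŵ i j = W i j − Σ_{k < j} Ŵ i k ⬝ (Ŵ k k)⁻¹ ⬝ (Ŵ j k)ᵀ`. -/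
noncomputable def chol {N : ℕ} {n : Fin N → ℕ}
    (W : ∀ i j : Fin N, Matrix (Fin (n i)) (Fin (n j)) ℝ)
    (i j : Fin N) : Matrix (Fin (n i)) (Fin (n j)) ℝ :=
  W i j - ∑ k : Fin N,
    if h : (k : ℕ) < (j : ℕ) then
      chol W i k * (chol W k k)⁻¹ * (chol W j k)ᵀ
    else 0
termination_by (j : ℕ)
decreasing_by all_goals exact h

theorem chol_eq_zero_of_lt {N : ℕ} {n : Fin N → ℕ}
    (W : ∀ i j : Fin N, Matrix (Fin (n i)) (Fin (n j)) ℝ) (c : Fin N → Fin N)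
    (hW0 : ∀ i j, j < c i → W i j = 0) {i j : Fin N} (hj : j < c i) :
    chol W i j = 0 := by
  rw [chol, hW0 i j hj, zero_sub, neg_eq_zero]
  refine Finset.sum_eq_zero fun k _ => ?_
  split
  case isTrue hk =>
    rw [chol_eq_zero_of_lt W c hW0 (lt_trans hk hj), Matrix.zero_mul, Matrix.zero_mul]
  case isFalse => rfl
termination_by (j : ℕ)

theorem chol_mul_inv_mul_transpose_eq_zero_of_lt_max {N : ℕ} {n : Fin N → ℕ}
    (W : ∀ i j : Fin N, Matrix (Fin (n i)) (Fin (n j)) ℝ) (c : Fin N → Fin N)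
    (hW0 : ∀ i j, j < c i → W i j = 0) {i j k : Fin N} (hk : k < max (c i) (c j)) :
    chol W i k * (chol W k k)⁻¹ * (chol W j k)ᵀ = 0 := by
  rcases lt_max_iff.mp hk with hki | hkj
  · rw [chol_eq_zero_of_lt W c hW0 hki, Matrix.zero_mul, Matrix.zero_mul]
  · rw [chol_eq_zero_of_lt W c hW0 hkj, Matrix.transpose_zero, Matrix.mul_zero]

theorem stmt2_general {N : ℕ} {n : Fin N → ℕ}
    (W : ∀ i j : Fin N, Matrix (Fin (n i)) (Fin (n j)) ℝ)
    (c : Fin N → Fin N)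
    (hW0 : ∀ i j, j < c i → W i j = 0) :
    (∀ i j : Fin N, j < c i → j ≤ i → chol W i j = 0) ∧
    (∀ i j : Fin N, j ≤ i → chol W i j =
      W i j - ∑ k : Fin N,
        if max (c i) (c j) ≤ k ∧ (k : ℕ) < (j : ℕ) then
          chol W i k * (chol W k k)⁻¹ * (chol W j k)ᵀ
        else 0) := by
  refine ⟨fun i j hj _ => chol_eq_zero_of_lt W c hW0 hj, fun i j _ => ?_⟩
  rw [chol]
  congr 1
  refine Finset.sum_congr rfl fun k _ => ?_
  by_cases hkj : (k : ℕ) < j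
  · by_cases hk : max (c i) (c j) ≤ k
    · rw [dif_pos hkj, if_pos ⟨hk, hkj⟩]
    · rw [dif_pos hkj, if_neg fun h => hk h.1,
        chol_mul_inv_mul_transpose_eq_zero_of_lt_max W c hW0 (not_le.mp hk)]
  · rw [dif_neg hkj, if_neg fun h => hkj h.2]

/-- If the pivots of the block Cholesky recursion of a symmetric block matrix `W`
are positive definite, and `W i j = 0` whenever `j < c i` (for some `c` with
`c i ≤ i`), then also `Ŵ i j = 0` for `j < c i` with `j ≤ i`, and consequently,
for `j ≤ i`, the sum in the recursion for `Ŵ i j` may start at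
`k = max (c i) (c j)` instead of `k = 1`. -/
theorem stmt2 {N : ℕ} {n : Fin N → ℕ}
    (W : ∀ i j : Fin N, Matrix (Fin (n i)) (Fin (n j)) ℝ)
    (hsym : ∀ i j, W j i = (W i j)ᵀ)
    (hpiv : ∀ k : Fin N, (chol W k k).PosDef)
    (c : Fin N → Fin N) (hc : ∀ i, c i ≤ i)
    (hW0 : ∀ i j, j < c i → W i j = 0) :
    (∀ i j : Fin N, j < c i → j ≤ i → chol W i j = 0) ∧
    (∀ i j : Fin N, j ≤ i → chol W i j =
      W i j - ∑ k : Fin N,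
        if max (c i) (c j) ≤ k ∧ (k : ℕ) < (j : ℕ) then
          chol W i k * (chol W k k)⁻¹ * (chol W j k)ᵀ
        else 0) :=
  stmt2_general W c hW0
end

section
/- Let A ∈ ℝ^{n×n}, B ∈ ℝ^{n×p}, E ∈ ℝ^{n×q}, C ∈ ℝ^{m×n}, F ∈ ℝ^{m×q}, K ∈ ℝ^{p×n}, and let Q ∈ ℝ^{m×m} with −Q positive definite, S ∈ ℝ^{m×q}, R ∈ ℝ^{q×q} symmetric. Then there exists a symmetric positive definite P ∈ ℝ^{n×n} with [[−(A+BK)ᵀP − P(A+BK), −PE + CᵀS, Cᵀ], [⋆, FᵀS + SᵀF + R, Fᵀ], [⋆, ⋆, −Q⁻¹]] positive definite if and only if there exist a symmetric positive definite M ∈ ℝ^{n×n} and L ∈ ℝ^{p×n} with [[−(AM + BL) − (AM + BL)ᵀ, −E + MCᵀS, MCᵀ], [⋆, FᵀS + SᵀF + R, Fᵀ], [⋆, ⋆, −Q⁻¹]] positive definite and K = LM⁻¹. -/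
open Matrix

/-- A 3×3 block matrix assembled from its nine blocks. -/
def block3 {I J K : Type*}
    (M11 : Matrix I I ℝ) (M12 : Matrix I J ℝ) (M13 : Matrix I K ℝ)
    (M21 : Matrix J I ℝ) (M22 : Matrix J J ℝ) (M23 : Matrix J K ℝ)
    (M31 : Matrix K I ℝ) (M32 : Matrix K J ℝ) (M33 : Matrix K K ℝ) :
    Matrix ((I ⊕ J) ⊕ K) ((I ⊕ J) ⊕ K) ℝ :=
  Matrix.fromBlocks (Matrix.fromBlocks M11 M12 M21 M22)
    (Matrix.fromRows M13 M23) (Matrix.fromCols M31 M32) M33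

/-! The substitution `P = M⁻¹`, `K = L M⁻¹` turns the dissipativity LMI into one that is linear in
`(M, L)`: conjugating it by `diag(M, 1, 1)` multiplies the `P`-blocks by `M` and leaves the others
alone, and `M (A + BK)ᵀ P M + M P (A + BK) M = (AM + BL)ᵀ + (AM + BL)`. Congruence by an invertible
matrix preserves positive definiteness, so each LMI is feasible exactly when the other one is. -/

section Block3
variable {I J K : Type*} [Fintype I] [Fintype J] [Fintype K]
  [DecidableEq J] [DecidableEq K]

lemma transpose_mul_block3_mul (T : Matrix I I ℝ)
    (M11 : Matrix I I ℝ) (M12 : Matrix I J ℝ) (M13 : Matrix I K ℝ)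
    (M21 : Matrix J I ℝ) (M22 : Matrix J J ℝ) (M23 : Matrix J K ℝ)
    (M31 : Matrix K I ℝ) (M32 : Matrix K J ℝ) (M33 : Matrix K K ℝ) :
    (fromBlocks (fromBlocks T 0 0 1) 0 0 1)ᵀ * block3 M11 M12 M13 M21 M22 M23 M31 M32 M33 *
        fromBlocks (fromBlocks T 0 0 1) 0 0 1 =
      block3 (Tᵀ * M11 * T) (Tᵀ * M12) (Tᵀ * M13) (M21 * T) M22 M23 (M31 * T) M32 M33 := by
  simp only [block3, fromBlocks_transpose, transpose_zero, transpose_one, fromBlocks_multiply,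
    fromBlocks_mul_fromRows, fromCols_mul_fromBlocks, Matrix.mul_zero, Matrix.zero_mul,
    Matrix.mul_one, Matrix.one_mul, add_zero, zero_add]

lemma posDef_block3_congr_iff [DecidableEq I] {T : Matrix I I ℝ} (hT : IsUnit T)
    (M11 : Matrix I I ℝ) (M12 : Matrix I J ℝ) (M13 : Matrix I K ℝ)
    (M21 : Matrix J I ℝ) (M22 : Matrix J J ℝ) (M23 : Matrix J K ℝ)
    (M31 : Matrix K I ℝ) (M32 : Matrix K J ℝ) (M33 : Matrix K K ℝ) :
    (block3 (Tᵀ * M11 * T) (Tᵀ * M12) (Tᵀ * M13) (M21 * T) M22 M23 (M31 * T) M32 M33).PosDef ↔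
      (block3 M11 M12 M13 M21 M22 M23 M31 M32 M33).PosDef := by
  have hD : IsUnit (fromBlocks (fromBlocks T 0 0 (1 : Matrix J J ℝ)) 0 0 (1 : Matrix K K ℝ)) := by
    simp [hT]
  rw [← transpose_mul_block3_mul, ← conjTranspose_eq_transpose_of_trivial]
  exact hD.posDef_star_left_conjugate_iff
end Block3

section Congruence
variable {N : Type*} [Fintype N] [DecidableEq N] {M : Matrix N N ℝ}

lemma transpose_mul_lyapunov_inv_mul (hdet : IsUnit M.det) (hMt : Mᵀ = M) (X : Matrix N N ℝ) :
    Mᵀ * (-(Xᵀ * M⁻¹) - M⁻¹ * X) * M = -(X * M) - (X * M)ᵀ := by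
  rw [hMt, transpose_mul, hMt, Matrix.mul_sub, Matrix.sub_mul, Matrix.mul_neg, Matrix.neg_mul,
    mul_nonsing_inv_cancel_left M X hdet, ← Matrix.mul_assoc M,
    nonsing_inv_mul_cancel_right M _ hdet, neg_sub_comm]

variable {U V W : Type*} [Fintype U] [Fintype V] [Fintype W]
  [DecidableEq V] [DecidableEq W]

lemma posDef_dissipativity_lmi_inv_iff (hM : M.PosDef)
    (A : Matrix N N ℝ) (B : Matrix N U ℝ) (E : Matrix N V ℝ) (C : Matrix W N ℝ)
    (F : Matrix W V ℝ) (L : Matrix U N ℝ) (Q : Matrix W W ℝ) (S : Matrix W V ℝ)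
    (R : Matrix V V ℝ) :
    (block3 (-((A + B * (L * M⁻¹))ᵀ * M⁻¹) - M⁻¹ * (A + B * (L * M⁻¹)))
        (-(M⁻¹ * E) + Cᵀ * S) Cᵀ (-(M⁻¹ * E) + Cᵀ * S)ᵀ (Fᵀ * S + Sᵀ * F + R) Fᵀ
        C F (-Q⁻¹)).PosDef ↔
      (block3 (-(A * M + B * L) - (A * M + B * L)ᵀ) (-E + M * Cᵀ * S) (M * Cᵀ)
        (-E + M * Cᵀ * S)ᵀ (Fᵀ * S + Sᵀ * F + R) Fᵀ (M * Cᵀ)ᵀ F (-Q⁻¹)).PosDef := by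
  have hMt : Mᵀ = M := hM.isHermitian
  have hdet : IsUnit M.det := (isUnit_iff_isUnit_det M).mp hM.isUnit
  have h11 : (A + B * (L * M⁻¹)) * M = A * M + B * L := by
    rw [Matrix.add_mul, Matrix.mul_assoc, Matrix.mul_assoc, nonsing_inv_mul _ hdet, Matrix.mul_one]
  have h12 : Mᵀ * (-(M⁻¹ * E) + Cᵀ * S) = -E + M * Cᵀ * S := by
    rw [hMt, Matrix.mul_add, Matrix.mul_neg, ← Matrix.mul_assoc, mul_nonsing_inv _ hdet,
      Matrix.one_mul, Matrix.mul_assoc]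
  have h21 : (-(M⁻¹ * E) + Cᵀ * S)ᵀ * M = (-E + M * Cᵀ * S)ᵀ := by
    rw [← h12, transpose_mul, transpose_transpose]
  have h31 : C * M = (M * Cᵀ)ᵀ := by
    rw [transpose_mul, transpose_transpose, hMt]
  rw [← posDef_block3_congr_iff hM.isUnit, transpose_mul_lyapunov_inv_mul hdet hMt,
    h11, h12, h21, h31, hMt]
end Congruence

theorem stmt7_general {n p q m : ℕ}
    (A : Matrix (Fin n) (Fin n) ℝ) (B : Matrix (Fin n) (Fin p) ℝ)
    (E : Matrix (Fin n) (Fin q) ℝ) (C : Matrix (Fin m) (Fin n) ℝ)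
    (F : Matrix (Fin m) (Fin q) ℝ) (K : Matrix (Fin p) (Fin n) ℝ)
    (Q : Matrix (Fin m) (Fin m) ℝ)
    (S : Matrix (Fin m) (Fin q) ℝ)
    (R : Matrix (Fin q) (Fin q) ℝ) :
    (∃ P : Matrix (Fin n) (Fin n) ℝ, P.PosDef ∧
      (block3 (-((A + B * K)ᵀ * P) - P * (A + B * K)) (-(P * E) + Cᵀ * S) Cᵀ
              (-(P * E) + Cᵀ * S)ᵀ (Fᵀ * S + Sᵀ * F + R) Fᵀ
              C F (-Q⁻¹)).PosDef) ↔
    (∃ (M : Matrix (Fin n) (Fin n) ℝ) (L : Matrix (Fin p) (Fin n) ℝ),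
      M.PosDef ∧
      (block3 (-(A * M + B * L) - (A * M + B * L)ᵀ) (-E + M * Cᵀ * S) (M * Cᵀ)
              (-E + M * Cᵀ * S)ᵀ (Fᵀ * S + Sᵀ * F + R) Fᵀ
              (M * Cᵀ)ᵀ F (-Q⁻¹)).PosDef ∧
      K = L * M⁻¹) := by
  constructor
  · rintro ⟨P, hP, hLMI⟩
    have hdet : IsUnit P.det := (isUnit_iff_isUnit_det P).mp hP.isUnit
    have hK : K = K * P⁻¹ * P⁻¹⁻¹ := by
      rw [nonsing_inv_nonsing_inv P hdet, nonsing_inv_mul_cancel_right P K hdet]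
    refine ⟨P⁻¹, K * P⁻¹, hP.inv, ?_, hK⟩
    rwa [← posDef_dissipativity_lmi_inv_iff hP.inv, ← hK, nonsing_inv_nonsing_inv P hdet]
  · rintro ⟨M, L, hM, hLMI, rfl⟩
    exact ⟨M⁻¹, hM.inv, (posDef_dissipativity_lmi_inv_iff hM ..).mpr hLMI⟩

/-- Full-state feedback (Q,S,R)-dissipativation: the closed-loop dissipativity
LMI is feasible (in `P ≻ 0`) iff its change-of-variables reformulation is
feasible (in `M ≻ 0` and `L`, with `K = L M⁻¹`). -/
theorem stmt7 {n p q m : ℕ}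
    (A : Matrix (Fin n) (Fin n) ℝ) (B : Matrix (Fin n) (Fin p) ℝ)
    (E : Matrix (Fin n) (Fin q) ℝ) (C : Matrix (Fin m) (Fin n) ℝ)
    (F : Matrix (Fin m) (Fin q) ℝ) (K : Matrix (Fin p) (Fin n) ℝ)
    (Q : Matrix (Fin m) (Fin m) ℝ) (hQ : (-Q).PosDef)
    (S : Matrix (Fin m) (Fin q) ℝ)
    (R : Matrix (Fin q) (Fin q) ℝ) (hR : Rᵀ = R) :
    (∃ P : Matrix (Fin n) (Fin n) ℝ, P.PosDef ∧
      (block3 (-((A + B * K)ᵀ * P) - P * (A + B * K)) (-(P * E) + Cᵀ * S) Cᵀ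
              (-(P * E) + Cᵀ * S)ᵀ (Fᵀ * S + Sᵀ * F + R) Fᵀ
              C F (-Q⁻¹)).PosDef) ↔
    (∃ (M : Matrix (Fin n) (Fin n) ℝ) (L : Matrix (Fin p) (Fin n) ℝ),
      M.PosDef ∧
      (block3 (-(A * M + B * L) - (A * M + B * L)ᵀ) (-E + M * Cᵀ * S) (M * Cᵀ)
              (-E + M * Cᵀ * S)ᵀ (Fᵀ * S + Sᵀ * F + R) Fᵀ
              (M * Cᵀ)ᵀ F (-Q⁻¹)).PosDef ∧
      K = L * M⁻¹) :=
  stmt7_general A B E C F K Q S R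
end

section
/- Let A ∈ ℝ^{n×n}, B ∈ ℝ^{n×p}, E ∈ ℝ^{n×q}, C ∈ ℝ^{m×n}, D ∈ ℝ^{m×p}, F ∈ ℝ^{m×q}, K ∈ ℝ^{p×n}, and γ > 0. Then there exists a symmetric positive definite P ∈ ℝ^{n×n} with [[−(A+BK)ᵀP − P(A+BK), −PE, −(C+DK)ᵀ], [⋆, γI, −Fᵀ], [⋆, ⋆, γI]] positive definite if and only if there exist a symmetric positive definite M ∈ ℝ^{n×n} and L ∈ ℝ^{p×n} with [[−(AM + BL) − (AM + BL)ᵀ, −E, −MCᵀ − LᵀDᵀ], [⋆, γI, −Fᵀ], [⋆, ⋆, γI]] positive definite and K = LM⁻¹. -/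
open Matrix

/-!
Congruence with `diag(P⁻¹, I, I)` carries the bounded-real LMI in `(P, K)` to the synthesis LMI
in `(M, L) = (P⁻¹, K P⁻¹)`: the first block row and column are multiplied by `P⁻¹`, which turns
`-(A + BK)ᵀP - P(A + BK)` into `-(AM + BL) - (AM + BL)ᵀ`. Congruence by an invertible matrix
preserves positive definiteness, and `K = L M⁻¹` is exactly the relation `L = K M`.
-/

namespace Matrix

variable {ι κ μ : Type*} [Fintype ι] [Fintype κ] [Fintype μ] [DecidableEq κ] [DecidableEq μ]

theorem IsUnit.posDef_mul_mul_transpose_iff [DecidableEq ι] {X G : Matrix ι ι ℝ}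
    (hX : IsUnit X) :
    (X * G * Xᵀ).PosDef ↔ G.PosDef := by
  simpa [star_eq_conjTranspose, conjTranspose_eq_transpose_of_trivial] using
    hX.posDef_star_right_conjugate_iff (x := G)

theorem block3_congr (X a : Matrix ι ι ℝ) (b : Matrix ι κ ℝ) (c : Matrix ι μ ℝ)
    (d : Matrix κ ι ℝ) (e : Matrix κ κ ℝ) (f : Matrix κ μ ℝ)
    (g : Matrix μ ι ℝ) (h : Matrix μ κ ℝ) (i : Matrix μ μ ℝ) :
    fromBlocks (fromBlocks X 0 0 1) 0 0 1 * block3 a b c d e f g h i *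
        (fromBlocks (fromBlocks X 0 0 1) 0 0 1)ᵀ
      = block3 (X * a * Xᵀ) (X * b) (X * c) (d * Xᵀ) e f (g * Xᵀ) h i := by
  simp [block3, fromBlocks_transpose, fromBlocks_multiply, fromBlocks_mul_fromRows,
    fromCols_mul_fromBlocks, Matrix.mul_assoc]

theorem IsUnit.posDef_block3_congr_iff [DecidableEq ι] {X : Matrix ι ι ℝ} (hX : IsUnit X)
    (a : Matrix ι ι ℝ) (b : Matrix ι κ ℝ) (c : Matrix ι μ ℝ)
    (d : Matrix κ ι ℝ) (e : Matrix κ κ ℝ) (f : Matrix κ μ ℝ)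
    (g : Matrix μ ι ℝ) (h : Matrix μ κ ℝ) (i : Matrix μ μ ℝ) :
    (block3 (X * a * Xᵀ) (X * b) (X * c) (d * Xᵀ) e f (g * Xᵀ) h i).PosDef ↔
      (block3 a b c d e f g h i).PosDef := by
  have hT :
      IsUnit (fromBlocks (fromBlocks X 0 0 (1 : Matrix κ κ ℝ)) 0 0 (1 : Matrix μ μ ℝ)) := by
    rw [isUnit_iff_isUnit_det, det_fromBlocks_zero₂₁, det_fromBlocks_zero₂₁]
    simpa using (isUnit_iff_isUnit_det X).1 hX
  rw [← block3_congr, hT.posDef_mul_mul_transpose_iff]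

end Matrix

section HInfinity

variable {ι υ κ μ : Type*} [Fintype ι] [Fintype υ] [Fintype κ] [Fintype μ]
  [DecidableEq ι] [DecidableEq κ] [DecidableEq μ]
  (A : Matrix ι ι ℝ) (B : Matrix ι υ ℝ) (E : Matrix ι κ ℝ) (C : Matrix μ ι ℝ)
  (D : Matrix μ υ ℝ) (F : Matrix μ κ ℝ) (γ : ℝ)

def boundedRealLMI (K : Matrix υ ι ℝ) (P : Matrix ι ι ℝ) :
    Matrix ((ι ⊕ κ) ⊕ μ) ((ι ⊕ κ) ⊕ μ) ℝ :=
  block3 (-((A + B * K)ᵀ * P) - P * (A + B * K)) (-(P * E)) (-(C + D * K)ᵀ)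
    (-(P * E))ᵀ (γ • 1) (-Fᵀ) (-(C + D * K)) (-F) (γ • 1)

def synthesisLMI (M : Matrix ι ι ℝ) (L : Matrix υ ι ℝ) :
    Matrix ((ι ⊕ κ) ⊕ μ) ((ι ⊕ κ) ⊕ μ) ℝ :=
  block3 (-(A * M + B * L) - (A * M + B * L)ᵀ) (-E) (-(M * Cᵀ) - Lᵀ * Dᵀ)
    (-E)ᵀ (γ • 1) (-Fᵀ) (-(M * Cᵀ) - Lᵀ * Dᵀ)ᵀ (-F) (γ • 1)

theorem posDef_synthesisLMI_iff {M : Matrix ι ι ℝ} (hM : M.PosDef) (K : Matrix υ ι ℝ) :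
    (synthesisLMI A B E C D F γ M (K * M)).PosDef ↔
      (boundedRealLMI A B E C D F γ K M⁻¹).PosDef := by
  have hMdet : IsUnit M.det := (isUnit_iff_isUnit_det M).1 hM.isUnit
  have hMP : M * M⁻¹ = 1 := mul_nonsing_inv M hMdet
  have hPM : M⁻¹ * M = 1 := nonsing_inv_mul M hMdet
  have hMt : Mᵀ = M := hM.isHermitian.eq
  have h11 : M * (-((A + B * K)ᵀ * M⁻¹) - M⁻¹ * (A + B * K)) * Mᵀ
      = -(A * M + B * (K * M)) - (A * M + B * (K * M))ᵀ := by
    calc _ = -(M * (A + B * K)ᵀ * (M⁻¹ * M)) - M * M⁻¹ * ((A + B * K) * M) := by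
            simp only [hMt, Matrix.mul_sub, Matrix.sub_mul, Matrix.mul_neg, Matrix.neg_mul,
              Matrix.mul_assoc]
      _ = _ := by
            rw [hPM, hMP, Matrix.mul_one, Matrix.one_mul, ← hMt, ← transpose_mul, hMt,
              Matrix.add_mul, Matrix.mul_assoc, neg_sub_comm]
  have h12 : M * -(M⁻¹ * E) = -E := by
    rw [Matrix.mul_neg, ← Matrix.mul_assoc, hMP, Matrix.one_mul]
  have h13 : M * -(C + D * K)ᵀ = -(M * Cᵀ) - (K * M)ᵀ * Dᵀ := by
    simp only [transpose_add, transpose_mul, hMt, Matrix.mul_neg, Matrix.mul_add,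
      Matrix.mul_assoc, neg_add, sub_eq_add_neg]
  have h21 : (-(M⁻¹ * E))ᵀ * Mᵀ = (-E)ᵀ := by
    rw [← transpose_mul, h12]
  have h31 : -(C + D * K) * Mᵀ = (-(M * Cᵀ) - (K * M)ᵀ * Dᵀ)ᵀ := by
    rw [← h13, transpose_mul, transpose_neg, transpose_transpose, Matrix.neg_mul]
  rw [boundedRealLMI, ← hM.isUnit.posDef_block3_congr_iff, h11, h12, h13, h21, h31]
  rfl

end HInfinity

theorem stmt8_general {n p q m : ℕ}
    (A : Matrix (Fin n) (Fin n) ℝ) (B : Matrix (Fin n) (Fin p) ℝ)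
    (E : Matrix (Fin n) (Fin q) ℝ) (C : Matrix (Fin m) (Fin n) ℝ)
    (D : Matrix (Fin m) (Fin p) ℝ) (F : Matrix (Fin m) (Fin q) ℝ)
    (K : Matrix (Fin p) (Fin n) ℝ) (γ : ℝ) :
    (∃ P : Matrix (Fin n) (Fin n) ℝ, P.PosDef ∧
      (block3 (-((A + B * K)ᵀ * P) - P * (A + B * K)) (-(P * E)) (-(C + D * K)ᵀ)
              (-(P * E))ᵀ (γ • (1 : Matrix (Fin q) (Fin q) ℝ)) (-Fᵀ)
              (-(C + D * K)) (-F) (γ • (1 : Matrix (Fin m) (Fin m) ℝ))).PosDef) ↔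
    (∃ (M : Matrix (Fin n) (Fin n) ℝ) (L : Matrix (Fin p) (Fin n) ℝ),
      M.PosDef ∧
      (block3 (-(A * M + B * L) - (A * M + B * L)ᵀ) (-E) (-(M * Cᵀ) - Lᵀ * Dᵀ)
              (-E)ᵀ (γ • (1 : Matrix (Fin q) (Fin q) ℝ)) (-Fᵀ)
              (-(M * Cᵀ) - Lᵀ * Dᵀ)ᵀ (-F) (γ • (1 : Matrix (Fin m) (Fin m) ℝ))).PosDef ∧
      K = L * M⁻¹) := by
  constructor
  · rintro ⟨P, hP, hLMI⟩
    have hPdet : IsUnit P.det := (isUnit_iff_isUnit_det P).1 hP.isUnit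
    have hPP : P⁻¹⁻¹ = P := nonsing_inv_nonsing_inv P hPdet
    refine ⟨P⁻¹, K * P⁻¹, hP.inv, ?_, ?_⟩
    · exact (posDef_synthesisLMI_iff A B E C D F γ hP.inv K).2 (by rwa [hPP])
    · rw [hPP, Matrix.mul_assoc, nonsing_inv_mul P hPdet, Matrix.mul_one]
  · rintro ⟨M, L, hM, hLMI, hK⟩
    have hL : L = K * M := by
      rw [hK, Matrix.mul_assoc, nonsing_inv_mul M ((isUnit_iff_isUnit_det M).1 hM.isUnit),
        Matrix.mul_one]
    subst hL
    exact ⟨M⁻¹, hM.inv, (posDef_synthesisLMI_iff A B E C D F γ hM K).1 hLMI⟩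

/-- Full-state feedback H∞-optimal control: the closed-loop bounded-real LMI is
feasible (in `P ≻ 0`) iff its change-of-variables reformulation is feasible
(in `M ≻ 0` and `L`, with `K = L M⁻¹`). -/
theorem stmt8 {n p q m : ℕ}
    (A : Matrix (Fin n) (Fin n) ℝ) (B : Matrix (Fin n) (Fin p) ℝ)
    (E : Matrix (Fin n) (Fin q) ℝ) (C : Matrix (Fin m) (Fin n) ℝ)
    (D : Matrix (Fin m) (Fin p) ℝ) (F : Matrix (Fin m) (Fin q) ℝ)
    (K : Matrix (Fin p) (Fin n) ℝ) (γ : ℝ) (hγ : 0 < γ) :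
    (∃ P : Matrix (Fin n) (Fin n) ℝ, P.PosDef ∧
      (block3 (-((A + B * K)ᵀ * P) - P * (A + B * K)) (-(P * E)) (-(C + D * K)ᵀ)
              (-(P * E))ᵀ (γ • (1 : Matrix (Fin q) (Fin q) ℝ)) (-Fᵀ)
              (-(C + D * K)) (-F) (γ • (1 : Matrix (Fin m) (Fin m) ℝ))).PosDef) ↔
    (∃ (M : Matrix (Fin n) (Fin n) ℝ) (L : Matrix (Fin p) (Fin n) ℝ),
      M.PosDef ∧
      (block3 (-(A * M + B * L) - (A * M + B * L)ᵀ) (-E) (-(M * Cᵀ) - Lᵀ * Dᵀ)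
              (-E)ᵀ (γ • (1 : Matrix (Fin q) (Fin q) ℝ)) (-Fᵀ)
              (-(M * Cᵀ) - Lᵀ * Dᵀ)ᵀ (-F) (γ • (1 : Matrix (Fin m) (Fin m) ℝ))).PosDef ∧
      K = L * M⁻¹) :=
  stmt8_general A B E C D F K γ
end

section
/- Let A ∈ ℝ^{n×n}, C ∈ ℝ^{m×n}, and L ∈ ℝ^{n×m}. Then A − LC is Hurwitz if and only if there exist a symmetric positive definite P ∈ ℝ^{n×n} and K ∈ ℝ^{n×m} such that −AᵀP − PA + CᵀKᵀ + KC is positive definite and L = P⁻¹K. -/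
/-!
With `K = P * L` and `P` symmetric, the matrix in the LMI is `-(Mᵀ * P) - P * M` for
`M = A - L * C`, so the theorem is Lyapunov's characterization of Hurwitz matrices.

If `P ≻ 0`, `-(MᵀP + PM) ≻ 0` and `M v = z v` with `v ≠ 0` in `ℂⁿ`, then
`v* (-(MᵀP + PM)) v = -2 Re z · v* P v`, and both quadratic forms have positive real part, so
`Re z < 0`.

Conversely, on a generalized eigenspace of eigenvalue `μ`, `exp (t M)` is `e^{tμ}` times a
polynomial in `t`, so `‖exp (t M)‖` decays exponentially when `M` is Hurwitz. Then
`P = ∫₀^∞ exp (t Mᵀ) exp (t M) dt` converges, is positive semidefinite, and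
`MᵀP + PM = ∫₀^∞ d/dt (exp (t Mᵀ) exp (t M)) dt = -1`. A positive semidefinite solution of this
equation has trivial kernel, hence is positive definite.
-/

open Matrix

/-- A real square matrix is Hurwitz if every root in `ℂ` of its characteristic
polynomial has strictly negative real part. -/
def IsHurwitz {n : ℕ} (A : Matrix (Fin n) (Fin n) ℝ) : Prop :=
  ∀ z : ℂ, ((A.map (Complex.ofReal)).charpoly).IsRoot z → z.re < 0

open NormedSpace Filter Topology MeasureTheory Set Asymptotics

variable {ι : Type*} [Fintype ι]

namespace Matrix

section LinftyNorm

attribute [local instance] Matrix.linftyOpSeminormedAddCommGroup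

theorem linfty_opNorm_le_sum_norm_col {m : Type*} [Fintype m] {α : Type*}
    [SeminormedAddCommGroup α] (A : Matrix m ι α) : ‖A‖ ≤ ∑ j, ‖A.col j‖ := by
  rw [linfty_opNorm_def]
  have h : (Finset.univ.sup fun i => ∑ j, ‖A i j‖₊) ≤ ∑ j, ‖A.col j‖₊ :=
    Finset.sup_le fun i _ => Finset.sum_le_sum fun j _ => nnnorm_le_pi_nnnorm (A.col j) i
  simpa only [NNReal.coe_sum, coe_nnnorm] using NNReal.coe_le_coe.2 h

theorem linfty_opNorm_map_ofReal {m : Type*} [Fintype m] (A : Matrix m ι ℝ) :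
    ‖A.map Complex.ofReal‖ = ‖A‖ := by
  simp [linfty_opNorm_def]

end LinftyNorm

theorem re_star_dotProduct_map_ofReal_mulVec (A : Matrix ι ι ℝ) (x : ι → ℂ) :
    (star x ⬝ᵥ A.map Complex.ofReal *ᵥ x).re =
      (fun i => (x i).re) ⬝ᵥ A *ᵥ (fun i => (x i).re) +
        (fun i => (x i).im) ⬝ᵥ A *ᵥ (fun i => (x i).im) := by
  simp only [dotProduct, mulVec, map_apply, Pi.star_apply, Complex.re_sum, Finset.mul_sum,
    ← Finset.sum_add_distrib]
  refine Finset.sum_congr rfl fun i _ => Finset.sum_congr rfl fun j _ => ?_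
  simp only [Complex.mul_re, Complex.mul_im, Complex.star_def, Complex.conj_re, Complex.conj_im,
    Complex.ofReal_re, Complex.ofReal_im]
  ring

theorem PosDef.re_star_dotProduct_map_ofReal_mulVec_pos {A : Matrix ι ι ℝ} (hA : A.PosDef)
    {x : ι → ℂ} (hx : x ≠ 0) : 0 < (star x ⬝ᵥ A.map Complex.ofReal *ᵥ x).re := by
  have hpos (y : ι → ℝ) (hy : y ≠ 0) : 0 < y ⬝ᵥ A *ᵥ y := by
    simpa using hA.dotProduct_mulVec_pos hy
  have hnonneg (y : ι → ℝ) : 0 ≤ y ⬝ᵥ A *ᵥ y := by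
    simpa using hA.posSemidef.dotProduct_mulVec_nonneg y
  rw [re_star_dotProduct_map_ofReal_mulVec]
  by_cases hre : (fun i => (x i).re) = 0
  · have him : (fun i => (x i).im) ≠ 0 := fun him =>
      hx (funext fun i => Complex.ext (congrFun hre i) (congrFun him i))
    linarith [hnonneg fun i => (x i).re, hpos _ him]
  · linarith [hpos _ hre, hnonneg fun i => (x i).im]

end Matrix

attribute [local instance] Matrix.linftyOpNormedRing Matrix.linftyOpNormedAlgebra

namespace Matrix

variable [DecidableEq ι]

theorem hasEigenvalue_toLin'_iff_isRoot_charpoly {K : Type*} [Field K] (A : Matrix ι ι K)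
    {μ : K} : Module.End.HasEigenvalue (toLin' A) μ ↔ A.charpoly.IsRoot μ := by
  rw [Module.End.hasEigenvalue_iff_mem_spectrum, spectrum_toLin', mem_spectrum_iff_isRoot_charpoly]

theorem map_ofReal_exp (A : Matrix ι ι ℝ) :
    (exp A).map Complex.ofReal = exp (A.map Complex.ofReal) :=
  map_exp Complex.ofRealHom.mapMatrix (continuous_id.matrix_map Complex.continuous_ofReal) A

theorem exp_mulVec_eq_sum_of_pow_mulVec_eq_zero {A : Matrix ι ι ℂ} {k : ℕ} {v : ι → ℂ}
    (hv : A ^ k *ᵥ v = 0) :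
    exp A *ᵥ v = ∑ j ∈ Finset.range k, (j.factorial : ℂ)⁻¹ • (A ^ j *ᵥ v) := by
  let evalAt : Matrix ι ι ℂ →L[ℂ] ι → ℂ :=
    (LinearMap.applyₗ v ∘ₗ (toLin' : Matrix ι ι ℂ ≃ₗ[ℂ] _).toLinearMap).toContinuousLinearMap
  have hevalAt (B : Matrix ι ι ℂ) : evalAt B = B *ᵥ v := rfl
  have hseries := (exp_series_hasSum_exp' (𝕂 := ℂ) A).mapL evalAt
  have hfinite : HasSum (fun j => evalAt ((j.factorial : ℂ)⁻¹ • A ^ j))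
      (∑ j ∈ Finset.range k, evalAt ((j.factorial : ℂ)⁻¹ • A ^ j)) := by
    refine hasSum_sum_of_ne_finset_zero fun j hj => ?_
    obtain ⟨i, rfl⟩ := Nat.exists_eq_add_of_le' (not_lt.1 (Finset.mem_range.not.1 hj))
    simp only [hevalAt, smul_mulVec, pow_add, ← mulVec_mulVec, hv, mulVec_zero, smul_zero]
  have h := hseries.unique hfinite
  simp only [hevalAt, smul_mulVec] at h
  exact h

theorem exp_smul_mulVec_eq_sum_of_pow_mulVec_eq_zero (A : Matrix ι ι ℂ) {μ : ℂ} {k : ℕ}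
    {v : ι → ℂ} (hv : (A - μ • 1) ^ k *ᵥ v = 0) (t : ℂ) :
    exp (t • A) *ᵥ v = Complex.exp (t * μ) •
      ∑ j ∈ Finset.range k, (t ^ j / j.factorial) • ((A - μ • 1) ^ j *ᵥ v) := by
  set N := A - μ • (1 : Matrix ι ι ℂ)
  have hsplit : t • A = (t * μ) • (1 : Matrix ι ι ℂ) + t • N := by
    simp only [N, smul_sub, smul_smul]; abel
  have hcomm : Commute ((t * μ) • (1 : Matrix ι ι ℂ)) (t • N) :=
    ((Commute.one_left N).smul_left _).smul_right _
  have hscalar : exp ((t * μ) • (1 : Matrix ι ι ℂ)) = Complex.exp (t * μ) • 1 := by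
    have h := (algebraMap_exp_comm (𝔸 := Matrix ι ι ℂ) (t * μ)).symm
    rwa [Algebra.algebraMap_eq_smul_one, Algebra.algebraMap_eq_smul_one,
      ← Complex.exp_eq_exp_ℂ] at h
  have hnilpotent : exp (t • N) *ᵥ v =
      ∑ j ∈ Finset.range k, (t ^ j / j.factorial) • (N ^ j *ᵥ v) := by
    rw [exp_mulVec_eq_sum_of_pow_mulVec_eq_zero (k := k)]
    · simp only [smul_pow, smul_mulVec, smul_smul, div_eq_inv_mul]
    · rw [smul_pow, smul_mulVec, hv, smul_zero]
  rw [hsplit, exp_add_of_commute _ _ hcomm, hscalar, smul_mul, one_mul, smul_mulVec, hnilpotent]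

theorem exists_norm_exp_smul_mulVec_le_of_pow_mulVec_eq_zero (A : Matrix ι ι ℂ) {μ : ℂ}
    {k : ℕ} {v : ι → ℂ} (hv : (A - μ • 1) ^ k *ᵥ v = 0) {β ε : ℝ} (hμ : μ.re ≤ β)
    (hε : 0 < ε) :
    ∃ c : ℝ, ∀ t : ℝ, 0 ≤ t → ‖exp ((t : ℂ) • A) *ᵥ v‖ ≤ c * Real.exp ((β + ε) * t) := by
  set w : ℕ → ι → ℂ := fun j => (A - μ • 1) ^ j *ᵥ v
  refine ⟨∑ j ∈ Finset.range k, (ε ^ j)⁻¹ * ‖w j‖, fun t ht => ?_⟩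
  -- `(ε t)^j / j! ≤ e^{ε t}` trades the polynomial factor for the extra rate `ε`.
  have hcoeff (j : ℕ) : ‖(t : ℂ) ^ j / j.factorial‖ ≤ (ε ^ j)⁻¹ * Real.exp (ε * t) := by
    have h := Real.pow_div_factorial_le_exp (ε * t) (by positivity) j
    rw [mul_pow, mul_div_assoc] at h
    rw [norm_div, norm_pow, Complex.norm_real, Complex.norm_natCast, Real.norm_of_nonneg ht,
      inv_mul_eq_div, le_div_iff₀' (by positivity)]
    exact h
  calc ‖exp ((t : ℂ) • A) *ᵥ v‖
      = Real.exp (t * μ.re) * ‖∑ j ∈ Finset.range k, ((t : ℂ) ^ j / j.factorial) • w j‖ := by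
        rw [exp_smul_mulVec_eq_sum_of_pow_mulVec_eq_zero A hv, norm_smul, Complex.norm_exp,
          Complex.re_ofReal_mul]
    _ ≤ Real.exp (β * t) * ∑ j ∈ Finset.range k, (ε ^ j)⁻¹ * Real.exp (ε * t) * ‖w j‖ := by
        refine mul_le_mul (Real.exp_le_exp.2 (by nlinarith)) ?_ (norm_nonneg _) (by positivity)
        refine (norm_sum_le _ _).trans (Finset.sum_le_sum fun j _ => ?_)
        rw [norm_smul]
        gcongr
        exact hcoeff j
    _ = (∑ j ∈ Finset.range k, (ε ^ j)⁻¹ * ‖w j‖) * Real.exp ((β + ε) * t) := by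
        rw [add_mul, Real.exp_add, Finset.sum_mul, Finset.mul_sum]
        exact Finset.sum_congr rfl fun j _ => by ring

theorem exists_norm_exp_smul_mulVec_le (A : Matrix ι ι ℂ) {β ε : ℝ}
    (hβ : ∀ μ : ℂ, A.charpoly.IsRoot μ → μ.re ≤ β) (hε : 0 < ε) (v : ι → ℂ) :
    ∃ c : ℝ, ∀ t : ℝ, 0 ≤ t → ‖exp ((t : ℂ) • A) *ᵥ v‖ ≤ c * Real.exp ((β + ε) * t) := by
  have hv : v ∈ ⨆ μ, Module.End.maxGenEigenspace (toLin' A) μ := by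
    rw [Module.End.iSup_maxGenEigenspace_eq_top]; trivial
  refine Submodule.iSup_induction _ (motive := fun w => ∃ c : ℝ, ∀ t : ℝ, 0 ≤ t →
    ‖exp ((t : ℂ) • A) *ᵥ w‖ ≤ c * Real.exp ((β + ε) * t)) hv (fun μ w hw => ?_)
    ⟨0, fun t _ => by simp⟩ ?_
  · rw [Module.End.maxGenEigenspace_eq_genEigenspace_finrank] at hw
    by_cases hw0 : w = 0
    · exact ⟨0, fun t _ => by simp [hw0]⟩
    have hμ : A.charpoly.IsRoot μ :=
      (hasEigenvalue_toLin'_iff_isRoot_charpoly A).1 <|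
        Module.End.hasEigenvalue_of_hasGenEigenvalue ((Submodule.ne_bot_iff _).2 ⟨w, hw, hw0⟩)
    rw [Module.End.mem_genEigenspace_nat] at hw
    refine exists_norm_exp_smul_mulVec_le_of_pow_mulVec_eq_zero A
      (k := Module.finrank ℂ (ι → ℂ)) ?_ (hβ μ hμ) hε
    have hlin : toLin' A - μ • 1 = toLinAlgEquiv' (A - μ • 1) := by
      rw [map_sub, map_smul, map_one]; rfl
    rwa [hlin, ← map_pow] at hw
  · rintro x y ⟨c₁, h₁⟩ ⟨c₂, h₂⟩
    refine ⟨c₁ + c₂, fun t ht => ?_⟩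
    rw [mulVec_add, add_mul]
    exact (norm_add_le _ _).trans (add_le_add (h₁ t ht) (h₂ t ht))

theorem PosSemidef.posDef_of_posDef_lyapunov {M P : Matrix ι ι ℝ} (hP : P.PosSemidef)
    (hQ : (-(Mᵀ * P) - P * M).PosDef) : P.PosDef := by
  have hker (x : ι → ℝ) (hx : P *ᵥ x = 0) : x = 0 := by
    by_contra hx0
    have hpos := hQ.dotProduct_mulVec_pos hx0
    have hPt : Pᵀ = P := hP.isHermitian
    rw [star_trivial, sub_mulVec, neg_mulVec, dotProduct_sub, dotProduct_neg, ← mulVec_mulVec,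
      ← mulVec_mulVec, hx, mulVec_zero, dotProduct_zero, dotProduct_mulVec, ← hPt,
      vecMul_transpose, hx, zero_dotProduct, neg_zero, sub_zero] at hpos
    exact hpos.false
  rw [hP.posDef_iff_isUnit, ← mulVec_injective_iff_isUnit]
  exact fun x y hxy => sub_eq_zero.1 (hker _ (by rw [mulVec_sub, hxy, sub_self]))

end Matrix

theorem integrableOn_Ioi_of_isBigO_exp_neg {E : Type*} [NormedAddCommGroup E]
    {f : ℝ → E} {a b : ℝ} (hb : 0 < b) (hf : ContinuousOn f (Ici a))
    (ho : f =O[atTop] fun x => Real.exp (-b * x)) : IntegrableOn f (Ioi a) :=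
  integrableOn_Ici_iff_integrableOn_Ioi (by finiteness) |>.mp <|
    (hf.locallyIntegrableOn measurableSet_Ici).integrableOn_of_isBigO_atTop
    ho ⟨Ioi b, Ioi_mem_atTop b, exp_neg_integrableOn_Ioi b hb⟩

variable {n : ℕ}

section Decay

variable {M : Matrix (Fin n) (Fin n) ℝ}

theorem IsHurwitz.transpose (hM : IsHurwitz M) : IsHurwitz Mᵀ := by
  intro z hz
  rw [transpose_map, charpoly_transpose] at hz
  exact hM z hz

theorem IsHurwitz.exists_neg_re_bound (hM : IsHurwitz M) :
    ∃ β < 0, ∀ z : ℂ, (M.map Complex.ofReal).charpoly.IsRoot z → z.re ≤ β := by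
  have hfin := Polynomial.finite_setOfPred_isRoot (M.map Complex.ofReal).charpoly_monic.ne_zero
  have hbound : ∀ᶠ β in 𝓝[<] (0 : ℝ),
      ∀ z ∈ {z | (M.map Complex.ofReal).charpoly.IsRoot z}, z.re ≤ β :=
    (eventually_all_finite hfin).2 fun z hz =>
      (eventually_ge_nhds (hM z hz)).filter_mono nhdsWithin_le_nhds
  obtain ⟨β, hβ, hβ0⟩ := (hbound.and self_mem_nhdsWithin).exists
  exact ⟨β, hβ0, hβ⟩

theorem IsHurwitz.isBigO_exp_smul (hM : IsHurwitz M) :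
    ∃ a > 0, (fun t : ℝ => exp (t • M)) =O[atTop] fun t => Real.exp (-a * t) := by
  obtain ⟨β, hβ0, hβ⟩ := hM.exists_neg_re_bound
  choose c hc using fun j => (M.map Complex.ofReal).exists_norm_exp_smul_mulVec_le hβ
    (ε := -β / 2) (by linarith) (Pi.single j 1)
  refine ⟨-β / 2, by linarith, IsBigO.of_bound (∑ j, c j) ?_⟩
  filter_upwards [eventually_ge_atTop 0] with t ht
  calc ‖exp (t • M)‖ = ‖exp ((t : ℂ) • M.map Complex.ofReal)‖ := by
        rw [← linfty_opNorm_map_ofReal, map_ofReal_exp]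
        congr 2
        ext; simp
    _ ≤ ∑ j, ‖exp ((t : ℂ) • M.map Complex.ofReal) *ᵥ Pi.single j 1‖ := by
        simpa only [mulVec_single_one] using linfty_opNorm_le_sum_norm_col _
    _ ≤ ∑ j, c j * Real.exp ((β + -β / 2) * t) := Finset.sum_le_sum fun j _ => hc j t ht
    _ = (∑ j, c j) * ‖Real.exp (-(-β / 2) * t)‖ := by
        rw [Real.norm_of_nonneg (Real.exp_nonneg _), ← Finset.sum_mul]; ring_nf

end Decay

section LyapunovIntegral

-- The `ℓ∞` operator norm does not induce the product topology of `Matrix` reducibly, so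
-- instance search cannot find this instance by itself.
noncomputable local instance : ContinuousENorm (Matrix (Fin n) (Fin n) ℝ) :=
  SeminormedAddGroup.toContinuousENorm

noncomputable def lyapunovIntegral (M : Matrix (Fin n) (Fin n) ℝ) : Matrix (Fin n) (Fin n) ℝ :=
  ∫ t in Ioi (0 : ℝ), exp (t • Mᵀ) * exp (t • M)

theorem lyapunovIntegral_transpose (M : Matrix (Fin n) (Fin n) ℝ) :
    (lyapunovIntegral M)ᵀ = lyapunovIntegral M := by
  have hsymm (t : ℝ) : (exp (t • Mᵀ) * exp (t • M))ᵀ = exp (t • Mᵀ) * exp (t • M) := by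
    rw [transpose_mul, ← exp_transpose, ← exp_transpose, transpose_smul, transpose_smul,
      transpose_transpose]
  let T := (transposeLinearEquiv (Fin n) (Fin n) ℝ ℝ).toContinuousLinearEquiv
  calc (lyapunovIntegral M)ᵀ = T (lyapunovIntegral M) := rfl
    _ = ∫ t in Ioi (0 : ℝ), T (exp (t • Mᵀ) * exp (t • M)) := (T.integral_comp_comm _).symm
    _ = lyapunovIntegral M := integral_congr_ae (ae_of_all _ hsymm)

theorem hasDerivAt_exp_transpose_mul_exp (M : Matrix (Fin n) (Fin n) ℝ) (t : ℝ) :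
    HasDerivAt (fun t : ℝ => exp (t • Mᵀ) * exp (t • M))
      (Mᵀ * (exp (t • Mᵀ) * exp (t • M)) + exp (t • Mᵀ) * exp (t • M) * M) t := by
  have h := (hasDerivAt_exp_smul_const' Mᵀ t).mul (hasDerivAt_exp_smul_const M t)
  exact h.congr_deriv (by simp only [mul_assoc]; rfl)

variable {M : Matrix (Fin n) (Fin n) ℝ}

theorem IsHurwitz.isBigO_exp_transpose_mul_exp (hM : IsHurwitz M) :
    ∃ a > 0, (fun t : ℝ => exp (t • Mᵀ) * exp (t • M)) =O[atTop] fun t => Real.exp (-a * t) := by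
  obtain ⟨a, ha, hMa⟩ := hM.isBigO_exp_smul
  obtain ⟨b, hb, hMb⟩ := hM.transpose.isBigO_exp_smul
  refine ⟨b + a, by positivity, (hMb.mul hMa).congr_right fun t => ?_⟩
  rw [← Real.exp_add]; ring_nf

theorem IsHurwitz.integrableOn_exp_transpose_mul_exp (hM : IsHurwitz M) :
    IntegrableOn (fun t : ℝ => exp (t • Mᵀ) * exp (t • M)) (Ioi 0) := by
  obtain ⟨a, ha, hO⟩ := hM.isBigO_exp_transpose_mul_exp
  refine integrableOn_Ioi_of_isBigO_exp_neg ha (fun t _ => ?_) hO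
  exact (hasDerivAt_exp_transpose_mul_exp M t).continuousAt.continuousWithinAt

theorem IsHurwitz.tendsto_exp_transpose_mul_exp (hM : IsHurwitz M) :
    Tendsto (fun t : ℝ => exp (t • Mᵀ) * exp (t • M)) atTop (𝓝 0) := by
  obtain ⟨a, ha, hO⟩ := hM.isBigO_exp_transpose_mul_exp
  exact hO.trans_tendsto <| Real.tendsto_exp_atBot.comp <|
    tendsto_id.const_mul_atTop_of_neg (neg_lt_zero.2 ha)

theorem IsHurwitz.transpose_mul_lyapunovIntegral_add (hM : IsHurwitz M) :
    Mᵀ * lyapunovIntegral M + lyapunovIntegral M * M = -1 := by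
  have hint := hM.integrableOn_exp_transpose_mul_exp
  have hFTC := integral_Ioi_of_hasDerivAt_of_tendsto
    (hasDerivAt_exp_transpose_mul_exp M 0).continuousAt.continuousWithinAt
    (fun t _ => hasDerivAt_exp_transpose_mul_exp M t)
    ((hint.const_mul Mᵀ).add (hint.mul_const M)) hM.tendsto_exp_transpose_mul_exp
  rw [integral_add (hint.const_mul Mᵀ) (hint.mul_const M), integral_const_mul_of_integrable hint,
    integral_mul_const_of_integrable hint] at hFTC
  simp only [zero_smul, exp_zero, mul_one, zero_sub] at hFTC
  exact hFTC

theorem IsHurwitz.posSemidef_lyapunovIntegral (hM : IsHurwitz M) :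
    (lyapunovIntegral M).PosSemidef := by
  refine posSemidef_iff_dotProduct_mulVec.2 ⟨lyapunovIntegral_transpose M, fun x => ?_⟩
  let q : Matrix (Fin n) (Fin n) ℝ →L[ℝ] ℝ := (LinearMap.applyₗ x ∘ₗ LinearMap.applyₗ x ∘ₗ
    (toLinearMap₂' ℝ : Matrix (Fin n) (Fin n) ℝ ≃ₗ[ℝ] _).toLinearMap).toContinuousLinearMap
  have hq (B : Matrix (Fin n) (Fin n) ℝ) : q B = x ⬝ᵥ B *ᵥ x := by
    simp [q, toLinearMap₂'_apply']
  have hqP : q (lyapunovIntegral M) = ∫ t in Ioi (0 : ℝ), q (exp (t • Mᵀ) * exp (t • M)) :=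
    (q.integral_comp_comm hM.integrableOn_exp_transpose_mul_exp).symm
  rw [star_trivial, ← hq, hqP]
  refine setIntegral_nonneg measurableSet_Ioi fun t _ => ?_
  rw [hq, ← mulVec_mulVec, ← transpose_smul, exp_transpose, dotProduct_mulVec, vecMul_transpose]
  exact Finset.sum_nonneg fun i _ => mul_self_nonneg _

end LyapunovIntegral

section Lyapunov

variable {M : Matrix (Fin n) (Fin n) ℝ}

theorem IsHurwitz.exists_posDef_lyapunov (hM : IsHurwitz M) :
    ∃ P : Matrix (Fin n) (Fin n) ℝ, P.PosDef ∧ (-(Mᵀ * P) - P * M).PosDef := by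
  have hQ : (-(Mᵀ * lyapunovIntegral M) - lyapunovIntegral M * M).PosDef := by
    rw [neg_sub_left, add_comm, hM.transpose_mul_lyapunovIntegral_add, neg_neg]
    exact PosDef.one
  exact ⟨_, hM.posSemidef_lyapunovIntegral.posDef_of_posDef_lyapunov hQ, hQ⟩

theorem isHurwitz_of_posDef_lyapunov {P : Matrix (Fin n) (Fin n) ℝ} (hP : P.PosDef)
    (hQ : (-(Mᵀ * P) - P * M).PosDef) : IsHurwitz M := by
  intro z hz
  obtain ⟨v, hv⟩ := ((hasEigenvalue_toLin'_iff_isRoot_charpoly _).2 hz).exists_hasEigenvector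
  set Mc := M.map Complex.ofReal
  set Pc := P.map Complex.ofReal
  set S := star v ⬝ᵥ Pc *ᵥ v
  have hMv : Mc *ᵥ v = z • v := by simpa [toLin'_apply] using hv.apply_eq_smul
  have hmap : (-(Mᵀ * P) - P * M).map Complex.ofReal = -(Mcᴴ * Pc) - Pc * Mc := by
    ext i j; simp [Mc, Pc, mul_apply]
  have hleft : star v ⬝ᵥ (Mcᴴ * Pc) *ᵥ v = star z * S := by
    rw [← mulVec_mulVec, dotProduct_mulVec, ← star_mulVec, hMv, star_smul, smul_dotProduct]
    rfl
  have hright : star v ⬝ᵥ (Pc * Mc) *ᵥ v = z * S := by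
    rw [← mulVec_mulVec, hMv, mulVec_smul, dotProduct_smul]
    rfl
  have hquad : star v ⬝ᵥ (-(Mᵀ * P) - P * M).map Complex.ofReal *ᵥ v =
      -((2 * z.re : ℝ) : ℂ) * S := by
    rw [hmap, sub_mulVec, neg_mulVec, dotProduct_sub, dotProduct_neg, hleft, hright,
      Complex.star_def]
    linear_combination (-S) * Complex.add_conj z
  have hQv := hQ.re_star_dotProduct_map_ofReal_mulVec_pos hv.2
  have hPv := hP.re_star_dotProduct_map_ofReal_mulVec_pos hv.2
  rw [hquad, neg_mul, Complex.neg_re, Complex.re_ofReal_mul] at hQv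
  nlinarith

theorem isHurwitz_iff_exists_posDef_lyapunov :
    IsHurwitz M ↔ ∃ P : Matrix (Fin n) (Fin n) ℝ, P.PosDef ∧ (-(Mᵀ * P) - P * M).PosDef :=
  ⟨IsHurwitz.exists_posDef_lyapunov, fun ⟨_, hP, hQ⟩ => isHurwitz_of_posDef_lyapunov hP hQ⟩

end Lyapunov

theorem Matrix.lyapunov_sub_mul_eq {κ : Type*} [Fintype κ] {A P : Matrix ι ι ℝ}
    {C : Matrix κ ι ℝ} {L : Matrix ι κ ℝ} (hP : P.IsSymm) :
    -((A - L * C)ᵀ * P) - P * (A - L * C) = -(Aᵀ * P) - P * A + Cᵀ * (P * L)ᵀ + P * L * C := by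
  rw [transpose_sub, transpose_mul, transpose_mul, hP.eq, Matrix.sub_mul, Matrix.mul_sub,
    Matrix.mul_assoc, Matrix.mul_assoc]
  abel

/-- Luenberger observer design LMI: the error dynamics matrix `A − LC` is
Hurwitz iff there are `P ≻ 0` (symmetric) and `K` with
`−AᵀP − PA + CᵀKᵀ + KC ≻ 0` and `L = P⁻¹K`. -/
theorem stmt9 {n m : ℕ}
    (A : Matrix (Fin n) (Fin n) ℝ) (C : Matrix (Fin m) (Fin n) ℝ)
    (L : Matrix (Fin n) (Fin m) ℝ) :
    IsHurwitz (A - L * C) ↔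
      ∃ (P : Matrix (Fin n) (Fin n) ℝ) (K : Matrix (Fin n) (Fin m) ℝ),
        P.PosDef ∧ (-(Aᵀ * P) - P * A + Cᵀ * Kᵀ + K * C).PosDef ∧ L = P⁻¹ * K := by
  rw [isHurwitz_iff_exists_posDef_lyapunov]
  constructor
  · rintro ⟨P, hP, hQ⟩
    have hdet := (isUnit_iff_isUnit_det P).1 hP.isUnit
    refine ⟨P, P * L, hP, ?_, (nonsing_inv_mul_cancel_left _ _ hdet).symm⟩
    rwa [← lyapunov_sub_mul_eq (isHermitian_iff_isSymm.1 hP.isHermitian)]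
  · rintro ⟨P, K, hP, hQ, rfl⟩
    have hdet := (isUnit_iff_isUnit_det P).1 hP.isUnit
    refine ⟨P, hP, ?_⟩
    rwa [lyapunov_sub_mul_eq (isHermitian_iff_isSymm.1 hP.isHermitian),
      mul_nonsing_inv_cancel_left _ _ hdet]
end

section
/- Let P ∈ ℝ^{2n×2n} be symmetric and invertible, written in n×n blocks as P = [[X, M], [Mᵀ, Z]], and write its inverse in n×n blocks as P⁻¹ = [[Y, N], [Nᵀ, W]]. If M is invertible, then P is positive definite if and only if the 2×2 block matrix [[Y, I], [I, X]] is positive definite. -/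
/-!
Since `P ≻ 0 ↔ P⁻¹ ≻ 0`, it suffices to exhibit a congruence carrying `P⁻¹` to `[[Y, I], [I, X]]`.
The matrix `Π_x = [[I, X], [0, Mᵀ]]` does it: its second block column is the first block column of
`P`, so `P⁻¹ Π_x = [[Y, I], [Nᵀ, 0]] = Π_y`, and then `Π_xᵀ P⁻¹ Π_x = [[Y, I], [XY + MNᵀ, X]]`,
whose lower left block is the `(1,1)` block of `P P⁻¹ = I`. `Π_x` is invertible because `M` is.
-/

open Matrix

namespace Matrix

theorem IsSymm.toBlocks₂₁_eq {α m n : Type*} {P : Matrix (m ⊕ n) (m ⊕ n) α} (hP : P.IsSymm) :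
    P.toBlocks₂₁ = P.toBlocks₁₂ᵀ := by
  nth_rw 1 [← hP.eq]; rfl

theorem IsSymm.toBlocks₁₁ {α m n : Type*} {P : Matrix (m ⊕ n) (m ⊕ n) α} (hP : P.IsSymm) :
    P.toBlocks₁₁.IsSymm := by
  nth_rw 1 [IsSymm, ← hP.eq]; rfl

variable {R : Type*} [CommRing R] {m n : Type*} [Fintype m] [Fintype n] [DecidableEq m]
  [DecidableEq n]

/-- The paper's `Π_x = [[I, X], [0, Mᵀ]]` for `P = [[X, M], [Mᵀ, Z]]`. -/
def piX (P : Matrix (m ⊕ n) (m ⊕ n) R) : Matrix (m ⊕ n) (m ⊕ m) R :=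
  fromBlocks 1 P.toBlocks₁₁ 0 P.toBlocks₂₁

theorem isUnit_piX_iff {P : Matrix (n ⊕ n) (n ⊕ n) R} :
    IsUnit (piX P) ↔ IsUnit P.toBlocks₂₁ := by
  simp only [isUnit_iff_isUnit_det, piX, det_fromBlocks_zero₂₁, det_one, one_mul]

theorem mul_piX_of_mul_eq_one {P Q : Matrix (m ⊕ n) (m ⊕ n) R} (hQP : Q * P = 1) :
    Q * piX P = fromBlocks Q.toBlocks₁₁ 1 Q.toBlocks₂₁ 0 := by
  rw [← fromBlocks_toBlocks P, ← fromBlocks_toBlocks Q, fromBlocks_multiply, ← fromBlocks_one,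
    fromBlocks_inj] at hQP
  rw [piX, ← fromBlocks_toBlocks Q, fromBlocks_multiply]
  simp [hQP.1, hQP.2.2.1]

theorem piX_transpose_mul_mul_piX {P Q : Matrix (m ⊕ n) (m ⊕ n) R} (hP : P.IsSymm)
    (hQP : Q * P = 1) :
    (piX P)ᵀ * Q * piX P = fromBlocks Q.toBlocks₁₁ 1 1 P.toBlocks₁₁ := by
  have hPQ := mul_eq_one_comm.mp hQP
  rw [← fromBlocks_toBlocks P, ← fromBlocks_toBlocks Q, fromBlocks_multiply, ← fromBlocks_one,
    fromBlocks_inj] at hPQ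
  rw [Matrix.mul_assoc, mul_piX_of_mul_eq_one hQP, piX, fromBlocks_transpose,
    fromBlocks_multiply]
  simp [hP.toBlocks₁₁.eq, hP.toBlocks₂₁_eq, hPQ.1]

end Matrix

/-- Change-of-variables property for dynamic output feedback synthesis:
if `P = [[X, M], [Mᵀ, Z]]` is symmetric and invertible with `M` invertible,
and `P⁻¹ = [[Y, N], [Nᵀ, W]]`, then `P ≻ 0` iff `[[Y, I], [I, X]] ≻ 0`. -/
theorem stmt11 {n : ℕ}
    (P : Matrix (Fin n ⊕ Fin n) (Fin n ⊕ Fin n) ℝ)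
    (hsym : Pᵀ = P) (hinv : IsUnit P) (hM : IsUnit (P.toBlocks₁₂)) :
    P.PosDef ↔
      (Matrix.fromBlocks ((P⁻¹).toBlocks₁₁) (1 : Matrix (Fin n) (Fin n) ℝ)
        (1 : Matrix (Fin n) (Fin n) ℝ) (P.toBlocks₁₁)).PosDef := by
  have hPiX : IsUnit (piX P) :=
    isUnit_piX_iff.mpr (IsSymm.toBlocks₂₁_eq hsym ▸ (isUnit_transpose _).mpr hM)
  rw [← posDef_inv_iff, ← hPiX.posDef_star_left_conjugate_iff, star_eq_conjTranspose,
    conjTranspose_eq_transpose_of_trivial,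
    piX_transpose_mul_mul_piX hsym (nonsing_inv_mul P ((isUnit_iff_isUnit_det P).mp hinv))]
end

section
/- Let A ∈ ℝ^{n×n}, B ∈ ℝ^{n×p}, C ∈ ℝ^{m×n}. The following are equivalent: (i) there exist matrices A_c ∈ ℝ^{n×n}, B_c ∈ ℝ^{n×m}, C_c ∈ ℝ^{p×n}, D_c ∈ ℝ^{p×m} and a symmetric positive definite P ∈ ℝ^{2n×2n} such that −ĀᵀP − PĀ is positive definite, where Ā = [[A + B D_c C, B C_c], [B_c C, A_c]]; (ii) there exist symmetric positive definite X, Y ∈ ℝ^{n×n} and matrices A_n ∈ ℝ^{n×n}, B_n ∈ ℝ^{n×m}, C_n ∈ ℝ^{p×n}, D_n ∈ ℝ^{p×m} such that [[Y, I], [I, X]] is positive definite and [[−(AY + BC_n) − (AY + BC_n)ᵀ, −A − B D_n C − A_nᵀ], [⋆, −(XA + B_n C) − (XA + B_n C)ᵀ]] is positive definite. -/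
/-!
Write `P = [[X, U], [Uᵀ, W]]` and `P⁻¹ = [[Y, V], [Vᵀ, Z]]`, and let `Π₁ = [[Y, 1], [Vᵀ, 0]]`,
so that `P Π₁ = Π₂ = [[1, X], [0, Uᵀ]]`. Congruence by `Π₁` turns `P` into `[[Y, 1], [1, X]]` and
`-(ĀᵀP + PĀ)` into `-(Kᵀ + K)` with `K = Π₂ᵀ Ā Π₁`, whose blocks are affine in the new variables
`Aₙ, Bₙ, Cₙ, Dₙ`; when `Π₁` and `U` are invertible this change of variables can be inverted, and
congruence by an invertible matrix preserves definiteness.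

For (i) ⇒ (ii), replacing `P` by `P + ε [[0, 1], [1, 0]]` for a small `ε` keeps both inequalities
strict and makes `U` invertible; then `Π₁ = P⁻¹ Π₂` is invertible. For (ii) ⇒ (i), take `V = 1`
and `U = 1 - XY`, which is invertible because `[[Y, 1], [1, X]] ≻ 0`, and solve for the controller.
-/

open Matrix Filter Topology

namespace Matrix

section Algebra

variable {R : Type*} {ι κ μ : Type*}

theorem IsSymm.eq_fromBlocks_toBlocks {P : Matrix (ι ⊕ κ) (ι ⊕ κ) R} (hP : P.IsSymm) :
    P = Matrix.fromBlocks P.toBlocks₁₁ P.toBlocks₁₂ P.toBlocks₁₂ᵀ P.toBlocks₂₂ := by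
  rw [← fromBlocks_toBlocks P, isSymm_fromBlocks_iff] at hP
  conv_lhs => rw [← fromBlocks_toBlocks P]
  rw [hP.2.1]

variable [CommRing R] [Fintype ι] [Fintype κ] [Fintype μ]

theorem transpose_mul_lyapunov_mul {Abar P T : Matrix ι ι R} (hP : Pᵀ = P) :
    Tᵀ * (-(Abarᵀ * P) - P * Abar) * T = -((P * T)ᵀ * Abar * T)ᵀ - (P * T)ᵀ * Abar * T := by
  simp only [transpose_mul, transpose_transpose, hP, Matrix.mul_sub, Matrix.sub_mul,
    Matrix.mul_neg, Matrix.neg_mul, Matrix.mul_assoc]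

theorem fromBlocks_lmi_eq (A : Matrix ι ι R) (B : Matrix ι κ R) (C : Matrix μ ι R)
    (X Y An : Matrix ι ι R) (Bn : Matrix ι μ R) (Cn : Matrix κ ι R) (Dn : Matrix κ μ R) :
    fromBlocks (-(A * Y + B * Cn) - (A * Y + B * Cn)ᵀ) (-A - B * Dn * C - Anᵀ)
        (-A - B * Dn * C - Anᵀ)ᵀ (-(X * A + Bn * C) - (X * A + Bn * C)ᵀ) =
      -(fromBlocks (A * Y + B * Cn) (A + B * Dn * C) An (X * A + Bn * C))ᵀ -
        fromBlocks (A * Y + B * Cn) (A + B * Dn * C) An (X * A + Bn * C) := by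
  simp only [sub_eq_add_neg, fromBlocks_transpose, fromBlocks_neg, fromBlocks_add, transpose_add,
    transpose_neg, transpose_transpose, neg_add, fromBlocks_inj]
  exact ⟨add_comm _ _, add_comm _ _, trivial, add_comm _ _⟩

variable [DecidableEq ι]

theorem isUnit_fromBlocks_zero_one_one_zero :
    IsUnit (fromBlocks 0 1 1 0 : Matrix (ι ⊕ ι) (ι ⊕ ι) R) := by
  have h : (fromBlocks 0 1 1 0 : Matrix (ι ⊕ ι) (ι ⊕ ι) R) * fromBlocks 0 1 1 0 = 1 := by
    simp [fromBlocks_multiply, fromBlocks_one]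
  exact ⟨⟨_, _, h, h⟩, rfl⟩

theorem isUnit_fromBlocks_one_zero_iff {Y V : Matrix ι ι R} :
    IsUnit (fromBlocks Y (1 : Matrix ι ι R) V 0) ↔ IsUnit V := by
  rw [← isUnit_fromBlocks_zero_one_one_zero.mul_left_iff, fromBlocks_multiply]
  simp

theorem isUnit_one_sub_mul_of_isUnit_fromBlocks {X Y : Matrix ι ι R}
    (h : IsUnit (fromBlocks Y 1 1 X)) : IsUnit (1 - X * Y) := by
  rw [← isUnit_fromBlocks_zero_one_one_zero.mul_left_iff, fromBlocks_multiply] at h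
  simpa [isUnit_iff_isUnit_det] using h

theorem fromBlocks_mul_fromBlocks_one_zero {X U W Y V : Matrix ι ι R}
    (h₁ : X * Y + U * Vᵀ = 1) (h₂ : Uᵀ * Y + W * Vᵀ = 0) :
    fromBlocks X U Uᵀ W * fromBlocks Y 1 Vᵀ 0 = fromBlocks 1 X 0 Uᵀ := by
  simp [fromBlocks_multiply, h₁, h₂]

theorem transpose_fromBlocks_one_zero_mul {X Y U V : Matrix ι ι R} (hX : Xᵀ = X) (hY : Yᵀ = Y)
    (h₁ : X * Y + U * Vᵀ = 1) :
    (fromBlocks Y 1 Vᵀ 0)ᵀ * fromBlocks 1 X 0 Uᵀ = fromBlocks Y 1 1 X := by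
  have h₁' : Y * X + V * Uᵀ = 1 := by
    simpa [transpose_add, transpose_mul, hX, hY] using congrArg transpose h₁
  simp [fromBlocks_transpose, fromBlocks_multiply, hY, h₁']

theorem transpose_fromBlocks_mul_closedLoop_mul
    (A : Matrix ι ι R) (B : Matrix ι κ R) (C : Matrix μ ι R)
    {Ac X Y U V An : Matrix ι ι R} {Bc Bn : Matrix ι μ R} {Cc Cn : Matrix κ ι R}
    {Dc : Matrix κ μ R} (hX : Xᵀ = X)
    (hCn : Cn = Dc * C * Y + Cc * Vᵀ) (hBn : Bn = X * B * Dc + U * Bc)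
    (hAn : An = X * (A + B * Dc * C) * Y + X * B * Cc * Vᵀ + U * Bc * C * Y + U * Ac * Vᵀ) :
    (fromBlocks 1 X 0 Uᵀ)ᵀ * fromBlocks (A + B * Dc * C) (B * Cc) (Bc * C) Ac *
        fromBlocks Y 1 Vᵀ 0 =
      fromBlocks (A * Y + B * Cn) (A + B * Dc * C) An (X * A + Bn * C) := by
  subst hCn hBn hAn
  simp only [fromBlocks_transpose, fromBlocks_multiply, hX, transpose_transpose, transpose_one,
    transpose_zero, Matrix.one_mul, Matrix.zero_mul, Matrix.mul_one, Matrix.mul_zero, add_zero,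
    Matrix.add_mul, Matrix.mul_add, Matrix.mul_assoc, fromBlocks_inj]
  refine ⟨by abel, trivial, by abel, by abel⟩

end Algebra

section Real

variable {ι κ : Type*}

theorem PosDef.transpose_eq {M : Matrix ι ι ℝ} (hM : M.PosDef) : Mᵀ = M :=
  (isHermitian_iff_isSymm.mp hM.1).eq

theorem PosDef.toBlocks₁₁ {P : Matrix (ι ⊕ κ) (ι ⊕ κ) ℝ} (hP : P.PosDef) :
    P.toBlocks₁₁.PosDef :=
  hP.submatrix Sum.inl_injective

theorem PosDef.toBlocks₂₂ {P : Matrix (ι ⊕ κ) (ι ⊕ κ) ℝ} (hP : P.PosDef) :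
    P.toBlocks₂₂.PosDef :=
  hP.submatrix Sum.inr_injective

variable [Fintype ι]

theorem PosDef.eventually_add_smul {M N : Matrix ι ι ℝ} (hM : M.PosDef) (hN : N.IsHermitian) :
    ∀ᶠ ε in 𝓝 (0 : ℝ), (M + ε • N).PosDef := by
  have hquad : Continuous fun q : ℝ × (ι → ℝ) => q.2 ⬝ᵥ (M + q.1 • N) *ᵥ q.2 := by
    fun_prop
  have hsphere : ∀ᶠ ε in 𝓝 (0 : ℝ), ∀ u ∈ Metric.sphere (0 : ι → ℝ) 1,
      0 < u ⬝ᵥ (M + ε • N) *ᵥ u := by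
    refine (isCompact_sphere _ _).eventually_forall_of_forall_eventually fun u hu => ?_
    have hu0 : u ≠ 0 := ne_zero_of_mem_unit_sphere ⟨u, hu⟩
    refine hquad.continuousAt.eventually_const_lt ?_
    simpa using hM.dotProduct_mulVec_pos hu0
  filter_upwards [hsphere] with ε hε
  refine .of_dotProduct_mulVec_pos (hM.1.add (hN.smul (IsSelfAdjoint.all ε))) fun x hx => ?_
  have hx' : 0 < ‖x‖ := norm_pos_iff.mpr hx
  have hu : ‖x‖⁻¹ • x ∈ Metric.sphere (0 : ι → ℝ) 1 := by
    simp [norm_smul, hx'.ne']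
  have key := mul_pos (pow_pos hx' 2) (hε _ hu)
  rw [star_trivial]
  convert key using 1
  simp only [mulVec_smul, dotProduct_smul, smul_dotProduct, smul_eq_mul]
  field_simp

variable [DecidableEq ι]

theorem IsUnit.posDef_transpose_conj_iff {U M : Matrix ι ι ℝ} (hU : IsUnit U) :
    (Uᵀ * M * U).PosDef ↔ M.PosDef := by
  simpa [star_eq_conjTranspose, conjTranspose_eq_transpose_of_trivial] using
    IsUnit.posDef_star_left_conjugate_iff (x := M) hU

theorem eventually_isUnit_add_smul_one {K : Type*} [Field K] [TopologicalSpace K] [T1Space K]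
    (M : Matrix ι ι K) : ∀ᶠ ε in 𝓝[≠] (0 : K), IsUnit (M + ε • 1) := by
  filter_upwards [(nhdsNE_le_cofinite 0) (finite_spectrum (-M)).eventually_cofinite_notMem]
    with ε hε
  rwa [spectrum.notMem_iff, Algebra.algebraMap_eq_smul_one, sub_neg_eq_add, add_comm] at hε

end Real

end Matrix

section LinearizingChange

variable {ι κ μ : Type*} [Fintype ι] [DecidableEq ι] [Fintype κ] [Fintype μ]
  (A : Matrix ι ι ℝ) (B : Matrix ι κ ℝ) (C : Matrix μ ι ℝ)

theorem posDef_fromBlocks_iff_of_mul_fromBlocks_one_zero {X U W Y V : Matrix ι ι ℝ}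
    (hX : Xᵀ = X) (hY : Yᵀ = Y) (hT : IsUnit (fromBlocks Y (1 : Matrix ι ι ℝ) Vᵀ 0))
    (h₁ : X * Y + U * Vᵀ = 1) (h₂ : Uᵀ * Y + W * Vᵀ = 0) :
    (fromBlocks X U Uᵀ W).PosDef ↔ (fromBlocks Y 1 1 X).PosDef := by
  rw [← hT.posDef_transpose_conj_iff, Matrix.mul_assoc, fromBlocks_mul_fromBlocks_one_zero h₁ h₂,
    transpose_fromBlocks_one_zero_mul hX hY h₁]

theorem lyapunov_posDef_iff_of_mul_fromBlocks_one_zero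
    {Ac X Y U V W An : Matrix ι ι ℝ} {Bc Bn : Matrix ι μ ℝ} {Cc Cn : Matrix κ ι ℝ}
    {Dc : Matrix κ μ ℝ} (hX : Xᵀ = X) (hW : Wᵀ = W)
    (hT : IsUnit (fromBlocks Y (1 : Matrix ι ι ℝ) Vᵀ 0))
    (h₁ : X * Y + U * Vᵀ = 1) (h₂ : Uᵀ * Y + W * Vᵀ = 0)
    (hCn : Cn = Dc * C * Y + Cc * Vᵀ) (hBn : Bn = X * B * Dc + U * Bc)
    (hAn : An = X * (A + B * Dc * C) * Y + X * B * Cc * Vᵀ + U * Bc * C * Y + U * Ac * Vᵀ) :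
    (-((fromBlocks (A + B * Dc * C) (B * Cc) (Bc * C) Ac)ᵀ * fromBlocks X U Uᵀ W)
        - fromBlocks X U Uᵀ W * fromBlocks (A + B * Dc * C) (B * Cc) (Bc * C) Ac).PosDef ↔
      (fromBlocks (-(A * Y + B * Cn) - (A * Y + B * Cn)ᵀ) (-A - B * Dc * C - Anᵀ)
        (-A - B * Dc * C - Anᵀ)ᵀ (-(X * A + Bn * C) - (X * A + Bn * C)ᵀ)).PosDef := by
  have hP : (fromBlocks X U Uᵀ W)ᵀ = fromBlocks X U Uᵀ W := by
    rw [fromBlocks_transpose, hX, hW, transpose_transpose]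
  rw [← hT.posDef_transpose_conj_iff, transpose_mul_lyapunov_mul hP,
    fromBlocks_mul_fromBlocks_one_zero h₁ h₂,
    transpose_fromBlocks_mul_closedLoop_mul A B C hX hCn hBn hAn, fromBlocks_lmi_eq]

theorem exists_lyapunov_isUnit_toBlocks₁₂ {Abar P : Matrix (ι ⊕ ι) (ι ⊕ ι) ℝ} (hP : P.PosDef)
    (hL : (-(Abarᵀ * P) - P * Abar).PosDef) :
    ∃ Q : Matrix (ι ⊕ ι) (ι ⊕ ι) ℝ,
      Q.PosDef ∧ (-(Abarᵀ * Q) - Q * Abar).PosDef ∧ IsUnit Q.toBlocks₁₂ := by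
  set S : Matrix (ι ⊕ ι) (ι ⊕ ι) ℝ := fromBlocks 0 1 1 0
  have hS : Sᵀ = S := by simp [S, fromBlocks_transpose]
  have hSherm : S.IsHermitian := isHermitian_iff_isSymm.mpr hS
  have hLSherm : (-(Abarᵀ * S) - S * Abar).IsHermitian := by
    refine isHermitian_iff_isSymm.mpr ?_
    simp only [IsSymm, transpose_sub, transpose_neg, transpose_mul, transpose_transpose, hS]
    abel
  have hL_add (ε : ℝ) : -(Abarᵀ * (P + ε • S)) - (P + ε • S) * Abar =
      (-(Abarᵀ * P) - P * Abar) + ε • (-(Abarᵀ * S) - S * Abar) := by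
    simp only [Matrix.mul_add, Matrix.add_mul, Matrix.mul_smul, Matrix.smul_mul, smul_sub,
      smul_neg]
    abel
  have hblock (ε : ℝ) : (P + ε • S).toBlocks₁₂ = P.toBlocks₁₂ + ε • 1 := by
    ext i j
    simp [S, toBlocks₁₂, one_apply]
  obtain ⟨ε, ⟨hQ, hLQ⟩, hU⟩ := ((eventually_nhdsWithin_of_eventually_nhds
    ((hP.eventually_add_smul hSherm).and (hL.eventually_add_smul hLSherm))).and
    (eventually_isUnit_add_smul_one P.toBlocks₁₂)).exists
  exact ⟨P + ε • S, hQ, hL_add ε ▸ hLQ, hblock ε ▸ hU⟩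

theorem exists_lmi_of_lyapunov {Ac : Matrix ι ι ℝ} {Bc : Matrix ι μ ℝ} {Cc : Matrix κ ι ℝ}
    {Dc : Matrix κ μ ℝ} {P : Matrix (ι ⊕ ι) (ι ⊕ ι) ℝ} (hP : P.PosDef)
    (hU : IsUnit P.toBlocks₁₂)
    (hL : (-((fromBlocks (A + B * Dc * C) (B * Cc) (Bc * C) Ac)ᵀ * P)
        - P * fromBlocks (A + B * Dc * C) (B * Cc) (Bc * C) Ac).PosDef) :
    ∃ (X Y An : Matrix ι ι ℝ) (Bn : Matrix ι μ ℝ) (Cn : Matrix κ ι ℝ) (Dn : Matrix κ μ ℝ),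
      X.PosDef ∧ Y.PosDef ∧ (fromBlocks Y 1 1 X).PosDef ∧
      (fromBlocks (-(A * Y + B * Cn) - (A * Y + B * Cn)ᵀ) (-A - B * Dn * C - Anᵀ)
        (-A - B * Dn * C - Anᵀ)ᵀ (-(X * A + Bn * C) - (X * A + Bn * C)ᵀ)).PosDef := by
  have hPinv : P⁻¹.PosDef := hP.inv
  have hPb := (isHermitian_iff_isSymm.mp hP.1).eq_fromBlocks_toBlocks
  have hPinvb := (isHermitian_iff_isSymm.mp hPinv.1).eq_fromBlocks_toBlocks
  set X := P.toBlocks₁₁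
  set U := P.toBlocks₁₂
  set W := P.toBlocks₂₂
  set Y := P⁻¹.toBlocks₁₁
  set V := P⁻¹.toBlocks₁₂
  have hX : Xᵀ = X := hP.toBlocks₁₁.transpose_eq
  have hY : Yᵀ = Y := hPinv.toBlocks₁₁.transpose_eq
  have hW : Wᵀ = W := hP.toBlocks₂₂.transpose_eq
  have hmul : P * P⁻¹ = 1 := mul_nonsing_inv P (isUnit_iff_isUnit_det _ |>.mp hP.isUnit)
  rw [hPinvb] at hmul
  rw [hPb, fromBlocks_multiply, ← fromBlocks_one, fromBlocks_inj] at hmul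
  obtain ⟨h₁, -, h₂, -⟩ := hmul
  have hT : IsUnit (fromBlocks Y (1 : Matrix ι ι ℝ) Vᵀ 0) := by
    have hPT : fromBlocks Y 1 Vᵀ 0 = P⁻¹ * fromBlocks 1 X 0 Uᵀ := by
      rw [← fromBlocks_mul_fromBlocks_one_zero h₁ h₂, ← hPb,
        nonsing_inv_mul_cancel_left _ _ (isUnit_iff_isUnit_det _ |>.mp hP.isUnit)]
    rw [hPT]
    exact hPinv.isUnit.mul
      (isUnit_fromBlocks_zero₂₁.mpr ⟨isUnit_one, (isUnit_transpose _).mpr hU⟩)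
  rw [hPb] at hP hL
  have hG := (posDef_fromBlocks_iff_of_mul_fromBlocks_one_zero hX hY hT h₁ h₂).mp hP
  refine ⟨X, Y, _, _, _, Dc, by simpa using hG.toBlocks₂₂, by simpa using hG.toBlocks₁₁, hG,
    (lyapunov_posDef_iff_of_mul_fromBlocks_one_zero A B C hX hW hT h₁ h₂ rfl rfl rfl).mp hL⟩

theorem exists_lyapunov_of_lmi {X Y An : Matrix ι ι ℝ} {Bn : Matrix ι μ ℝ} {Cn : Matrix κ ι ℝ}
    {Dn : Matrix κ μ ℝ} (hG : (fromBlocks Y 1 1 X).PosDef)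
    (hL : (fromBlocks (-(A * Y + B * Cn) - (A * Y + B * Cn)ᵀ) (-A - B * Dn * C - Anᵀ)
        (-A - B * Dn * C - Anᵀ)ᵀ (-(X * A + Bn * C) - (X * A + Bn * C)ᵀ)).PosDef) :
    ∃ (Ac : Matrix ι ι ℝ) (Bc : Matrix ι μ ℝ) (Cc : Matrix κ ι ℝ) (Dc : Matrix κ μ ℝ)
      (P : Matrix (ι ⊕ ι) (ι ⊕ ι) ℝ), P.PosDef ∧
      (-((fromBlocks (A + B * Dc * C) (B * Cc) (Bc * C) Ac)ᵀ * P)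
        - P * fromBlocks (A + B * Dc * C) (B * Cc) (Bc * C) Ac).PosDef := by
  have hY : Yᵀ = Y := by simpa using hG.toBlocks₁₁.transpose_eq
  have hX : Xᵀ = X := by simpa using hG.toBlocks₂₂.transpose_eq
  set U := 1 - X * Y with hU
  have hUinv : U * U⁻¹ = 1 := mul_nonsing_inv U
    (isUnit_iff_isUnit_det _ |>.mp (isUnit_one_sub_mul_of_isUnit_fromBlocks hG.isUnit))
  set Cc := Cn - Dn * C * Y
  set Bc := U⁻¹ * (Bn - X * B * Dn)
  set Ac := U⁻¹ * (An - X * (A + B * Dn * C) * Y - X * B * Cc - U * Bc * C * Y)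
  have h₁ : X * Y + U * 1ᵀ = 1 := by simp [hU]
  have h₂ : Uᵀ * Y + (Y * X * Y - Y) * 1ᵀ = 0 := by
    simp [hU, transpose_sub, hX, hY, Matrix.sub_mul, Matrix.mul_assoc]
  have hW : (Y * X * Y - Y)ᵀ = Y * X * Y - Y := by
    simp [transpose_sub, hX, hY, Matrix.mul_assoc]
  have hT : IsUnit (fromBlocks Y (1 : Matrix ι ι ℝ) 1ᵀ 0) :=
    isUnit_fromBlocks_one_zero_iff.mpr (by simp)
  refine ⟨Ac, Bc, Cc, Dn, fromBlocks X U Uᵀ (Y * X * Y - Y),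
    (posDef_fromBlocks_iff_of_mul_fromBlocks_one_zero hX hY hT h₁ h₂).mpr hG,
    (lyapunov_posDef_iff_of_mul_fromBlocks_one_zero A B C hX hW hT h₁ h₂ ?_ ?_ ?_).mpr hL⟩
  · simp [Cc]
  · simp [Bc, ← Matrix.mul_assoc, hUinv]
  · simp [Ac, ← Matrix.mul_assoc, hUinv]

end LinearizingChange

/-- Dynamic output feedback stabilization: the closed-loop Lyapunov LMI is
feasible (in the controller matrices and `P ≻ 0`) iff the change-of-variables
LMIs (in `X, Y ≻ 0` and `Aₙ, Bₙ, Cₙ, Dₙ`) are feasible. -/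
theorem stmt12 {n p m : ℕ}
    (A : Matrix (Fin n) (Fin n) ℝ) (B : Matrix (Fin n) (Fin p) ℝ)
    (C : Matrix (Fin m) (Fin n) ℝ) :
    (∃ (Ac : Matrix (Fin n) (Fin n) ℝ) (Bc : Matrix (Fin n) (Fin m) ℝ)
       (Cc : Matrix (Fin p) (Fin n) ℝ) (Dc : Matrix (Fin p) (Fin m) ℝ)
       (P : Matrix (Fin n ⊕ Fin n) (Fin n ⊕ Fin n) ℝ),
      P.PosDef ∧
      (-((Matrix.fromBlocks (A + B * Dc * C) (B * Cc) (Bc * C) Ac)ᵀ * P)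
        - P * (Matrix.fromBlocks (A + B * Dc * C) (B * Cc) (Bc * C) Ac)).PosDef) ↔
    (∃ (X Y : Matrix (Fin n) (Fin n) ℝ) (An : Matrix (Fin n) (Fin n) ℝ)
       (Bn : Matrix (Fin n) (Fin m) ℝ) (Cn : Matrix (Fin p) (Fin n) ℝ)
       (Dn : Matrix (Fin p) (Fin m) ℝ),
      X.PosDef ∧ Y.PosDef ∧
      (Matrix.fromBlocks Y (1 : Matrix (Fin n) (Fin n) ℝ)
        (1 : Matrix (Fin n) (Fin n) ℝ) X).PosDef ∧
      (Matrix.fromBlocks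
        (-(A * Y + B * Cn) - (A * Y + B * Cn)ᵀ) (-A - B * Dn * C - Anᵀ)
        (-A - B * Dn * C - Anᵀ)ᵀ (-(X * A + Bn * C) - (X * A + Bn * C)ᵀ)).PosDef) := by
  constructor
  · rintro ⟨Ac, Bc, Cc, Dc, P, hP, hL⟩
    obtain ⟨Q, hQ, hLQ, hU⟩ := exists_lyapunov_isUnit_toBlocks₁₂ hP hL
    exact exists_lmi_of_lyapunov A B C hQ hU hLQ
  · rintro ⟨X, Y, An, Bn, Cn, Dn, -, -, hG, hL⟩
    exact exists_lyapunov_of_lmi A B C hG hL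
end

section
/- Let A ∈ ℝ^{n×n}, B ∈ ℝ^{n×p}, C ∈ ℝ^{m×n}, D ∈ ℝ^{m×p}, let P ∈ ℝ^{n×n} be symmetric positive definite, Q ∈ ℝ^{m×m} with −Q positive definite, S ∈ ℝ^{m×p}, and R ∈ ℝ^{p×p} symmetric. Then the 2×2 block matrix [[P − AᵀPA + CᵀQC, −AᵀPB + CᵀS + CᵀQD], [⋆, −BᵀPB + DᵀQD + DᵀS + SᵀD + R]] is positive definite if and only if the 4×4 block matrix [[P, CᵀS, AᵀP, Cᵀ], [⋆, DᵀS + SᵀD + R, BᵀP, Dᵀ], [⋆, ⋆, P, 0], [⋆, ⋆, ⋆, −Q⁻¹]] is positive definite. -/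
/-!
The 4×4 matrix is `[[M, G], [Gᵀ, Z]]` with `M` its upper-left 2×2 block, `Z = diag(P, -Q⁻¹) ≻ 0` and
`G = [[AᵀP, Cᵀ], [BᵀP, Dᵀ]]`, so by the Schur complement it is positive definite iff
`M - G Z⁻¹ Gᵀ` is. Since `Z⁻¹ = diag(P⁻¹, -Q)`, this complement expands to the dissipativity LMI.
-/

open Matrix

def block4 {I J K L : Type*}
    (M11 : Matrix I I ℝ) (M12 : Matrix I J ℝ) (M13 : Matrix I K ℝ) (M14 : Matrix I L ℝ)
    (M21 : Matrix J I ℝ) (M22 : Matrix J J ℝ) (M23 : Matrix J K ℝ) (M24 : Matrix J L ℝ)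
    (M31 : Matrix K I ℝ) (M32 : Matrix K J ℝ) (M33 : Matrix K K ℝ) (M34 : Matrix K L ℝ)
    (M41 : Matrix L I ℝ) (M42 : Matrix L J ℝ) (M43 : Matrix L K ℝ) (M44 : Matrix L L ℝ) :
    Matrix ((I ⊕ J) ⊕ (K ⊕ L)) ((I ⊕ J) ⊕ (K ⊕ L)) ℝ :=
  Matrix.fromBlocks (Matrix.fromBlocks M11 M12 M21 M22)
    (Matrix.fromBlocks M13 M14 M23 M24)
    (Matrix.fromBlocks M31 M32 M41 M42)
    (Matrix.fromBlocks M33 M34 M43 M44)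

namespace Matrix

theorem inv_neg {n α : Type*} [Fintype n] [DecidableEq n] [CommRing α] (A : Matrix n n α) :
    (-A)⁻¹ = -A⁻¹ := by
  by_cases hA : IsUnit A
  · exact inv_eq_right_inv <| by
      rw [neg_mul_neg, mul_nonsing_inv A ((isUnit_iff_isUnit_det A).mp hA)]
  · rw [nonsing_inv_eq_ringInverse, nonsing_inv_eq_ringInverse, Ring.inverse_non_unit _ hA,
      Ring.inverse_non_unit _ (mt (IsUnit.neg_iff A).mp hA), neg_zero]

theorem inv_fromBlocks_zero_zero {m n α : Type*} [Fintype m] [Fintype n] [DecidableEq m]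
    [DecidableEq n] [CommRing α] {A : Matrix m m α} {D : Matrix n n α}
    (hA : IsUnit A) (hD : IsUnit D) :
    (fromBlocks A 0 0 D)⁻¹ = fromBlocks A⁻¹ 0 0 D⁻¹ := by
  simpa using inv_fromBlocks_zero₂₁_of_isUnit_iff A 0 D (iff_of_true hA hD)

namespace PosDef

variable {m n R : Type*} [Fintype m] [Fintype n] [DecidableEq n]
  [CommRing R] [PartialOrder R] [StarRing R] [StarOrderedRing R]

theorem posDef_fromBlocks₂₂_iff {D : Matrix n n R} (hD : D.PosDef) [Invertible D]
    (A : Matrix m m R) (B : Matrix m n R) :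
    (fromBlocks A B Bᴴ D).PosDef ↔ (A - B * D⁻¹ * Bᴴ).PosDef := by
  simp only [posDef_iff_dotProduct_mulVec, IsHermitian.fromBlocks₂₂ _ _ hD.1, dotProduct_mulVec]
  refine and_congr_right fun _ => ⟨fun h x hx => ?_, fun h x hx => ?_⟩
  · have hxy : x ⊕ᵥ -((D⁻¹ * Bᴴ) *ᵥ x) ≠ 0 := fun h0 => hx (funext fun i => congrFun h0 (.inl i))
    simpa [schur_complement_eq₂₂ A B _ _ hD.1] using h hxy
  · rw [← Sum.elim_comp_inl_inr x] at hx ⊢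
    rw [schur_complement_eq₂₂ A B _ _ hD.1]
    set u := x ∘ Sum.inl
    set v := x ∘ Sum.inr
    by_cases hu : u = 0
    · have hv : v ≠ 0 := fun hv => hx (by simp [hu, hv])
      simpa [hu, dotProduct_mulVec] using hD.dotProduct_mulVec_pos hv
    · exact add_pos_of_nonneg_of_pos (by simpa [dotProduct_mulVec] using
        hD.posSemidef.dotProduct_mulVec_nonneg ((D⁻¹ * Bᴴ) *ᵥ u + v)) (h hu)

theorem fromBlocks_zero_zero {K : Type*} [Field K] [PartialOrder K] [StarRing K]
    [StarOrderedRing K] {A : Matrix m m K} {D : Matrix n n K} (hA : A.PosDef) (hD : D.PosDef) :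
    (fromBlocks A 0 0 D).PosDef := by
  have := hD.isUnit.invertible
  simpa using (hD.posDef_fromBlocks₂₂_iff A 0).mpr (by simpa using hA)

end PosDef

end Matrix

theorem dissipativity_lmi_eq_schur_complement {k l m α : Type*} [Fintype k] [Fintype l]
    [Fintype m] [DecidableEq k] [CommRing α]
    (A : Matrix k k α) (B : Matrix k l α) (C : Matrix m k α) (D : Matrix m l α)
    {P : Matrix k k α} (hP : IsUnit P.det) (hPt : Pᵀ = P) {Q : Matrix m m α} (hQt : Qᵀ = Q)
    (S : Matrix m l α) (R : Matrix l l α) :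
    fromBlocks P (Cᵀ * S) (Cᵀ * S)ᵀ (Dᵀ * S + Sᵀ * D + R) -
        fromBlocks (Aᵀ * P) Cᵀ (Bᵀ * P) Dᵀ * fromBlocks P⁻¹ 0 0 (-Q) *
          (fromBlocks (Aᵀ * P) Cᵀ (Bᵀ * P) Dᵀ)ᵀ =
      fromBlocks (P - Aᵀ * P * A + Cᵀ * Q * C) (-(Aᵀ * P * B) + Cᵀ * S + Cᵀ * Q * D)
        (-(Aᵀ * P * B) + Cᵀ * S + Cᵀ * Q * D)ᵀ
        (-(Bᵀ * P * B) + Dᵀ * Q * D + Dᵀ * S + Sᵀ * D + R) := by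
  rw [fromBlocks_transpose, fromBlocks_multiply, fromBlocks_multiply, sub_eq_add_neg,
    fromBlocks_neg, fromBlocks_add, fromBlocks_inj]
  refine ⟨?_, ?_, ?_, ?_⟩ <;>
  · simp only [Matrix.mul_zero, add_zero, zero_add, transpose_mul, transpose_transpose,
      transpose_add, transpose_neg, Matrix.mul_neg, Matrix.neg_mul, hPt, hQt, Matrix.mul_assoc,
      nonsing_inv_mul_cancel_left _ _ hP]
    abel

theorem stmt16_general {n p m : ℕ}
    (A : Matrix (Fin n) (Fin n) ℝ) (B : Matrix (Fin n) (Fin p) ℝ)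
    (C : Matrix (Fin m) (Fin n) ℝ) (D : Matrix (Fin m) (Fin p) ℝ)
    (P : Matrix (Fin n) (Fin n) ℝ) (hP : P.PosDef)
    (Q : Matrix (Fin m) (Fin m) ℝ) (hQ : (-Q).PosDef)
    (S : Matrix (Fin m) (Fin p) ℝ)
    (R : Matrix (Fin p) (Fin p) ℝ) :
    (Matrix.fromBlocks
      (P - Aᵀ * P * A + Cᵀ * Q * C) (-(Aᵀ * P * B) + Cᵀ * S + Cᵀ * Q * D)
      (-(Aᵀ * P * B) + Cᵀ * S + Cᵀ * Q * D)ᵀ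
      (-(Bᵀ * P * B) + Dᵀ * Q * D + Dᵀ * S + Sᵀ * D + R)).PosDef ↔
    (block4 P (Cᵀ * S) (Aᵀ * P) Cᵀ
      (Cᵀ * S)ᵀ (Dᵀ * S + Sᵀ * D + R) (Bᵀ * P) Dᵀ
      (Aᵀ * P)ᵀ (Bᵀ * P)ᵀ P (0 : Matrix (Fin n) (Fin m) ℝ)
      C D (0 : Matrix (Fin m) (Fin n) ℝ) (-Q⁻¹)).PosDef := by
  have hQinv : (-Q⁻¹).PosDef := Q.inv_neg ▸ hQ.inv
  have hPt : P.IsSymm := by simpa [conjTranspose_eq_transpose_of_trivial] using hP.1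
  have hQt : Q.IsSymm := by simpa [conjTranspose_eq_transpose_of_trivial] using hQ.1
  have hZ := hP.fromBlocks_zero_zero hQinv
  have := hZ.isUnit.invertible
  have hZinv : (fromBlocks P 0 0 (-Q⁻¹))⁻¹ = fromBlocks P⁻¹ 0 0 (-Q) := by
    rw [inv_fromBlocks_zero_zero hP.isUnit hQinv.isUnit, ← Q.inv_neg,
      nonsing_inv_nonsing_inv _ ((isUnit_iff_isUnit_det _).mp hQ.isUnit)]
  have hblock : block4 P (Cᵀ * S) (Aᵀ * P) Cᵀ (Cᵀ * S)ᵀ (Dᵀ * S + Sᵀ * D + R) (Bᵀ * P) Dᵀ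
      (Aᵀ * P)ᵀ (Bᵀ * P)ᵀ P 0 C D 0 (-Q⁻¹) =
      fromBlocks (fromBlocks P (Cᵀ * S) (Cᵀ * S)ᴴ (Dᵀ * S + Sᵀ * D + R))
        (fromBlocks (Aᵀ * P) Cᵀ (Bᵀ * P) Dᵀ) (fromBlocks (Aᵀ * P) Cᵀ (Bᵀ * P) Dᵀ)ᴴ
        (fromBlocks P 0 0 (-Q⁻¹)) := by
    simp [block4, fromBlocks_transpose, conjTranspose_eq_transpose_of_trivial]
  rw [hblock, hZ.posDef_fromBlocks₂₂_iff, hZinv, conjTranspose_eq_transpose_of_trivial,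
    conjTranspose_eq_transpose_of_trivial,
    dissipativity_lmi_eq_schur_complement A B C D hP.det_pos.ne'.isUnit hPt hQt]

/-- The classical discrete-time (Q,S,R)-dissipativity LMI is positive definite
iff its 4×4 block reformulation is positive definite. -/
theorem stmt16 {n p m : ℕ}
    (A : Matrix (Fin n) (Fin n) ℝ) (B : Matrix (Fin n) (Fin p) ℝ)
    (C : Matrix (Fin m) (Fin n) ℝ) (D : Matrix (Fin m) (Fin p) ℝ)
    (P : Matrix (Fin n) (Fin n) ℝ) (hP : P.PosDef)
    (Q : Matrix (Fin m) (Fin m) ℝ) (hQ : (-Q).PosDef)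
    (S : Matrix (Fin m) (Fin p) ℝ)
    (R : Matrix (Fin p) (Fin p) ℝ) (hR : Rᵀ = R) :
    (Matrix.fromBlocks
      (P - Aᵀ * P * A + Cᵀ * Q * C) (-(Aᵀ * P * B) + Cᵀ * S + Cᵀ * Q * D)
      (-(Aᵀ * P * B) + Cᵀ * S + Cᵀ * Q * D)ᵀ
      (-(Bᵀ * P * B) + Dᵀ * Q * D + Dᵀ * S + Sᵀ * D + R)).PosDef ↔
    (block4 P (Cᵀ * S) (Aᵀ * P) Cᵀ
      (Cᵀ * S)ᵀ (Dᵀ * S + Sᵀ * D + R) (Bᵀ * P) Dᵀ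
      (Aᵀ * P)ᵀ (Bᵀ * P)ᵀ P (0 : Matrix (Fin n) (Fin m) ℝ)
      C D (0 : Matrix (Fin m) (Fin n) ℝ) (-Q⁻¹)).PosDef :=
  stmt16_general A B C D P hP Q hQ S R
end

section
/- Let A ∈ ℝ^{n×n}, B ∈ ℝ^{n×p}, and K ∈ ℝ^{p×n}. Then A + BK is Schur stable (every eigenvalue has modulus strictly less than 1) if and only if there exist a symmetric positive definite M ∈ ℝ^{n×n} and L ∈ ℝ^{p×n} such that the 2×2 block matrix [[M, MAᵀ + LᵀBᵀ], [AM + BL, M]] is positive definite and K = LM⁻¹. -/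
/-!
Put `F = A + B K` and `L = K M`. For symmetric `M` the off-diagonal blocks are `M Fᵀ` and
`F M = (M Fᵀ)ᵀ`, so by the Schur complement the block condition says exactly
`M - F M Fᵀ ≻ 0`: the theorem is the discrete Lyapunov criterion for `F`.
If `M - F M Fᵀ ≻ 0` and `wᴴ F = λ wᴴ`, the quadratic form of `M - F M Fᵀ` at `w` is
`(1 - |λ|²) wᴴ M w > 0`, so `|λ| < 1`. Conversely, if all eigenvalues lie in the unit disc,
Gelfand's formula makes `∑ Fᵏ (Fᵏ)ᵀ` converge geometrically, and its sum `M` satisfies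
`M - F M Fᵀ = 1`.
-/

open Matrix

/-- A real square matrix is Schur stable if every root in `ℂ` of its
characteristic polynomial has modulus strictly less than 1. -/
def IsSchur {n : ℕ} (A : Matrix (Fin n) (Fin n) ℝ) : Prop :=
  ∀ z : ℂ, ((A.map (Complex.ofReal)).charpoly).IsRoot z → ‖z‖ < 1

open Filter
open scoped ComplexOrder NNReal ENNReal

namespace Matrix

variable {m n : Type*} [Fintype m] [Fintype n] [DecidableEq m] [DecidableEq n]
  {𝕜 : Type*} [RCLike 𝕜]

theorem PosDef.posDef_fromBlocks₁₁ {A : Matrix m m 𝕜} (B : Matrix m n 𝕜) (D : Matrix n n 𝕜)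
    (hA : A.PosDef) : (fromBlocks A B Bᴴ D).PosDef ↔ (D - Bᴴ * A⁻¹ * B).PosDef := by
  have := hA.isUnit.invertible
  have hdet : (fromBlocks A B Bᴴ D).det = A.det * (D - Bᴴ * A⁻¹ * B).det := by
    rw [det_fromBlocks₁₁, invOf_eq_nonsing_inv]
  refine ⟨fun h => ?_, fun h => ?_⟩
  · refine ((hA.fromBlocks₁₁ B D).1 h.posSemidef).posDef_iff_det_ne_zero.2 ?_
    exact right_ne_zero_of_mul (hdet ▸ h.det_pos.ne')
  · refine ((hA.fromBlocks₁₁ B D).2 h.posSemidef).posDef_iff_det_ne_zero.2 ?_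
    rw [hdet]
    exact mul_ne_zero hA.det_pos.ne' h.det_pos.ne'

theorem PosDef.map_ofReal {Q : Matrix n n ℝ} (hQ : Q.PosDef) :
    (Q.map ((↑) : ℝ → 𝕜)).PosDef := by
  open scoped MatrixOrder Matrix.Norms.L2Operator in
  obtain ⟨C, rfl⟩ := CStarAlgebra.nonneg_iff_eq_star_mul_self.mp hQ.posSemidef.nonneg
  have hpsd : ((star C * C).map ((↑) : ℝ → 𝕜)).PosSemidef := by
    rw [Matrix.map_mul, star_eq_conjTranspose, conjTranspose_map _ fun _ => by simp]
    exact posSemidef_conjTranspose_mul_self _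
  refine hpsd.posDef_iff_det_ne_zero.2 ?_
  change ((algebraMap ℝ 𝕜).mapMatrix (star C * C)).det ≠ 0
  rw [← RingHom.map_det]
  exact RCLike.ofReal_ne_zero.2 hQ.det_pos.ne'

theorem norm_lt_one_of_mem_spectrum_of_posDef_sub {N P : Matrix n n 𝕜} (hP : P.PosDef)
    (hS : (P - N * P * Nᴴ).PosDef) {z : 𝕜} (hz : z ∈ spectrum 𝕜 N) : ‖z‖ < 1 := by
  rw [spectrum.mem_iff, isUnit_iff_isUnit_det, isUnit_iff_ne_zero, not_not,
    ← exists_vecMul_eq_zero_iff] at hz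
  obtain ⟨w, hw0, hw⟩ := hz
  have hwN : w ᵥ* N = z • w := by
    rw [vecMul_sub, sub_eq_zero, Algebra.algebraMap_eq_smul_one, vecMul_smul, vecMul_one] at hw
    exact hw.symm
  have hquad : star (star w) ⬝ᵥ ((N * P * Nᴴ) *ᵥ star w)
      = (z * star z) * (w ⬝ᵥ (P *ᵥ star w)) := by
    rw [star_star, ← mulVec_mulVec, ← mulVec_mulVec, dotProduct_mulVec, hwN, ← star_vecMul, hwN]
    simp only [star_smul, mulVec_smul, smul_dotProduct, dotProduct_smul, smul_eq_mul]
    ring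
  have hv0 : star w ≠ 0 := by simpa using hw0
  have hPw := hP.re_dotProduct_pos hv0
  have hSw := hS.re_dotProduct_pos hv0
  rw [star_star] at hPw
  rw [sub_mulVec, dotProduct_sub, hquad, map_sub, star_star, RCLike.star_def, RCLike.mul_conj,
    ← RCLike.ofReal_pow, RCLike.re_ofReal_mul] at hSw
  have : ‖z‖ ^ 2 < 1 := by nlinarith
  exact (sq_lt_one_iff₀ (norm_nonneg z)).1 this

section Real

variable {F M : Matrix n n ℝ}

theorem sub_mul_mul_transpose_eq_one_of_hasSum (h : HasSum (fun k : ℕ => F ^ k * (F ^ k)ᵀ) M) :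
    M - F * M * Fᵀ = 1 := by
  have hstep (k : ℕ) : F * (F ^ k * (F ^ k)ᵀ) * Fᵀ = F ^ (k + 1) * (F ^ (k + 1))ᵀ := by
    rw [pow_succ', transpose_mul, Matrix.mul_assoc, Matrix.mul_assoc, Matrix.mul_assoc]
  have hFMF := (h.mul_left F).mul_right Fᵀ
  have hshift := (hasSum_nat_add_iff' 1).2 h
  simp only [hstep] at hFMF
  simp only [Finset.range_one, Finset.sum_singleton, pow_zero, transpose_one,
    Matrix.mul_one] at hshift
  rw [hFMF.unique hshift, sub_sub_cancel]

theorem posDef_of_hasSum_pow_mul_transpose_pow (h : HasSum (fun k : ℕ => F ^ k * (F ^ k)ᵀ) M) :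
    M.PosDef := by
  have hsymm : Mᵀ = M := by
    refine h.matrix_transpose.unique ?_
    simpa only [transpose_mul, transpose_transpose] using h
  refine .of_dotProduct_mulVec_pos (isHermitian_iff_isSymm.2 hsymm) fun x hx => ?_
  have hq : HasSum (fun k : ℕ => star x ⬝ᵥ ((F ^ k * (F ^ k)ᵀ) *ᵥ x)) (star x ⬝ᵥ (M *ᵥ x)) :=
    h.map (AddMonoidHom.mk' (fun X => star x ⬝ᵥ (X *ᵥ x)) fun X Y => by
      simp only [add_mulVec, dotProduct_add])
      (continuous_const.dotProduct (continuous_id.matrix_mulVec continuous_const))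
  have hterm (k : ℕ) : 0 ≤ star x ⬝ᵥ ((F ^ k * (F ^ k)ᵀ) *ᵥ x) := by
    simpa only [conjTranspose_eq_transpose_of_trivial] using
      (posSemidef_self_mul_conjTranspose (F ^ k)).dotProduct_mulVec_nonneg x
  calc 0 < star x ⬝ᵥ x := dotProduct_star_self_pos_iff.2 hx
    _ = star x ⬝ᵥ ((F ^ 0 * (F ^ 0)ᵀ) *ᵥ x) := by simp
    _ ≤ star x ⬝ᵥ (M *ᵥ x) := le_hasSum hq 0 fun k _ => hterm k

theorem posDef_fromBlocks_iff_posDef_sub (hM : M.PosDef) :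
    (fromBlocks M (M * Fᵀ) (F * M) M).PosDef ↔ (M - F * M * Fᵀ).PosDef := by
  have hFM : F * M = (M * Fᵀ)ᴴ := by
    rw [conjTranspose_eq_transpose_of_trivial, transpose_mul, transpose_transpose,
      (isHermitian_iff_isSymm.1 hM.1).eq]
  rw [hFM, hM.posDef_fromBlocks₁₁, ← hFM,
    mul_nonsing_inv_cancel_right _ _ ((isUnit_iff_isUnit_det M).1 hM.isUnit), Matrix.mul_assoc]

end Real

end Matrix

namespace spectrum

theorem eventually_nnnorm_pow_le_of_spectralRadius_lt {A : Type*} [NormedRing A]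
    [NormedAlgebra ℂ A] [CompleteSpace A] {a : A} {r : ℝ≥0} (h : spectralRadius ℂ a < r) :
    ∀ᶠ k : ℕ in atTop, ‖a ^ k‖₊ ≤ r ^ k := by
  filter_upwards [(pow_nnnorm_pow_one_div_tendsto_nhds_spectralRadius a).eventually_lt_const h,
    eventually_gt_atTop 0] with k hk hk0
  rw [one_div, ENNReal.rpow_inv_lt_iff (by positivity), ENNReal.rpow_natCast] at hk
  exact_mod_cast hk.le

theorem summable_pow_mul_star_pow {A : Type*} [CStarAlgebra A] {a : A}
    (h : spectralRadius ℂ a < 1) : Summable fun k : ℕ => a ^ k * star (a ^ k) := by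
  obtain ⟨r, hr, hr1⟩ := ENNReal.lt_iff_exists_nnreal_btwn.mp h
  have hr1 : (r : ℝ) < 1 := by exact_mod_cast hr1
  refine Summable.of_norm_bounded_eventually_nat
    (summable_geometric_of_lt_one (by positivity) (pow_lt_one₀ r.2 hr1 two_ne_zero)) ?_
  filter_upwards [eventually_nnnorm_pow_le_of_spectralRadius_lt hr] with k hk
  have hk : ‖a ^ k‖ ≤ (r : ℝ) ^ k := by exact_mod_cast hk
  calc ‖a ^ k * star (a ^ k)‖ ≤ ‖a ^ k‖ * ‖a ^ k‖ := by
        simpa only [norm_star] using norm_mul_le (a ^ k) (star (a ^ k))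
    _ ≤ (r : ℝ) ^ k * (r : ℝ) ^ k := by gcongr
    _ = ((r : ℝ) ^ 2) ^ k := by ring

end spectrum

theorem isSchur_iff {n : ℕ} {F : Matrix (Fin n) (Fin n) ℝ} :
    IsSchur F ↔ ∀ z ∈ spectrum ℂ (F.map Complex.ofReal), ‖z‖ < 1 := by
  simp only [IsSchur, mem_spectrum_iff_isRoot_charpoly]

theorem IsSchur.spectralRadius_lt_one {n : ℕ} {F : Matrix (Fin n) (Fin n) ℝ} (hF : IsSchur F) :
    spectralRadius ℂ (F.map Complex.ofReal) < 1 := by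
  open scoped Matrix.Norms.L2Operator in
  rcases (spectrum ℂ (F.map Complex.ofReal)).eq_empty_or_nonempty with he | hne
  · simp [spectralRadius, he]
  · have := spectrum.spectralRadius_lt_of_forall_lt_of_nonempty hne (r := 1) fun z hz => by
      rw [← NNReal.coe_lt_coe]
      simpa using isSchur_iff.1 hF z hz
    simpa using this

theorem IsSchur.summable_pow_mul_transpose_pow {n : ℕ} {F : Matrix (Fin n) (Fin n) ℝ}
    (hF : IsSchur F) : Summable fun k : ℕ => F ^ k * (F ^ k)ᵀ := by
  -- Gelfand's formula needs a complex C⋆-algebra, so sum the complexified series first.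
  have h := by
    open scoped Matrix.Norms.L2Operator in
    exact spectrum.summable_pow_mul_star_pow hF.spectralRadius_lt_one
  have hmap (k : ℕ) : F.map Complex.ofReal ^ k * star (F.map Complex.ofReal ^ k)
      = (F ^ k * (F ^ k)ᵀ).map Complex.ofReal := by
    rw [show F.map Complex.ofReal ^ k = (F ^ k).map Complex.ofReal from
      (map_pow Complex.ofRealHom.mapMatrix F k).symm]
    ext i j
    simp [Matrix.mul_apply, -transpose_pow]
  simp only [hmap] at h
  exact Pi.summable.2 fun i => Pi.summable.2 fun j =>
    Complex.summable_ofReal.1 (Pi.summable.1 (Pi.summable.1 h i) j)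

theorem isSchur_iff_exists_posDef_sub {n : ℕ} {F : Matrix (Fin n) (Fin n) ℝ} :
    IsSchur F ↔ ∃ M : Matrix (Fin n) (Fin n) ℝ, M.PosDef ∧ (M - F * M * Fᵀ).PosDef := by
  refine ⟨fun hF => ?_, fun ⟨M, hM, hS⟩ => isSchur_iff.2 fun z hz => ?_⟩
  · obtain ⟨M, hM⟩ := hF.summable_pow_mul_transpose_pow
    refine ⟨M, posDef_of_hasSum_pow_mul_transpose_pow hM, ?_⟩
    rw [sub_mul_mul_transpose_eq_one_of_hasSum hM]
    exact PosDef.one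
  · refine norm_lt_one_of_mem_spectrum_of_posDef_sub hM.map_ofReal ?_ hz
    convert hS.map_ofReal (𝕜 := ℂ) using 1
    change _ = Complex.ofRealHom.mapMatrix (M - F * M * Fᵀ)
    rw [← conjTranspose_map _ fun _ => by simp, conjTranspose_eq_transpose_of_trivial,
      map_sub, map_mul, map_mul]
    rfl

/-- Discrete-time full-state feedback stabilization LMI: `A + BK` is Schur
stable iff there are `M ≻ 0` (symmetric) and `L` with
`[[M, MAᵀ + LᵀBᵀ], [AM + BL, M]] ≻ 0` and `K = L M⁻¹`. -/
theorem stmt17 {n p : ℕ}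
    (A : Matrix (Fin n) (Fin n) ℝ) (B : Matrix (Fin n) (Fin p) ℝ)
    (K : Matrix (Fin p) (Fin n) ℝ) :
    IsSchur (A + B * K) ↔
      ∃ (M : Matrix (Fin n) (Fin n) ℝ) (L : Matrix (Fin p) (Fin n) ℝ),
        M.PosDef ∧
        (Matrix.fromBlocks M (M * Aᵀ + Lᵀ * Bᵀ) (A * M + B * L) M).PosDef ∧
        K = L * M⁻¹ := by
  have hblocks (M : Matrix (Fin n) (Fin n) ℝ) (hM : M.PosDef) :
      fromBlocks M (M * Aᵀ + (K * M)ᵀ * Bᵀ) (A * M + B * (K * M)) M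
        = fromBlocks M (M * (A + B * K)ᵀ) ((A + B * K) * M) M := by
    rw [transpose_add, transpose_mul, transpose_mul, (isHermitian_iff_isSymm.1 hM.1).eq,
      Matrix.mul_add, Matrix.add_mul, Matrix.mul_assoc, Matrix.mul_assoc]
  have hdet (M : Matrix (Fin n) (Fin n) ℝ) (hM : M.PosDef) : IsUnit M.det :=
    (isUnit_iff_isUnit_det M).1 hM.isUnit
  rw [isSchur_iff_exists_posDef_sub]
  constructor
  · rintro ⟨M, hM, hS⟩
    refine ⟨M, K * M, hM, ?_, (mul_nonsing_inv_cancel_right M K (hdet M hM)).symm⟩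
    rwa [hblocks M hM, posDef_fromBlocks_iff_posDef_sub hM]
  · rintro ⟨M, L, hM, hLMI, rfl⟩
    rw [← nonsing_inv_mul_cancel_right M L (hdet M hM), hblocks M hM,
      posDef_fromBlocks_iff_posDef_sub hM] at hLMI
    exact ⟨M, hM, hLMI⟩
end

section
/- Let A ∈ ℝ^{n×n}, C ∈ ℝ^{m×n}, and L ∈ ℝ^{n×m}. Then A − LC is Schur stable (every eigenvalue has modulus strictly less than 1) if and only if there exist a symmetric positive definite P ∈ ℝ^{n×n} and K ∈ ℝ^{n×m} such that the 2×2 block matrix [[P, AᵀP − CᵀKᵀ], [PA − KC, P]] is positive definite and L = P⁻¹K. -/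
/-!
If `F` is Schur stable, Gelfand's formula makes `F ^ k → 0`, so some power `F ^ N` is a strict
contraction in the Euclidean operator norm; the finite Gramian `P = ∑_{k ≤ N} (F ^ k)ᵀ F ^ k`
then satisfies `P - Fᵀ P F = 1 - (F ^ (N + 1))ᵀ F ^ (N + 1) ≻ 0`. Conversely, evaluating the
quadratic form of `P - Fᵀ P F ≻ 0` at a complex eigenvector `v` with eigenvalue `z` gives
`(1 - |z|²) v* P v > 0`. Finally, with `K = P L` the block matrix of the statement is
`[[P, Fᵀ P], [P F, P]]` for `F = A - L C`, whose Schur complement with respect to the lower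
right block `P` is `P - Fᵀ P F`.
-/

open Matrix

open Filter Topology
open scoped ComplexOrder

theorem tendsto_pow_atTop_nhds_zero_of_spectralRadius_lt_one {A : Type*} [NormedRing A]
    [NormedAlgebra ℂ A] [CompleteSpace A] {a : A} (ha : spectralRadius ℂ a < 1) :
    Tendsto (a ^ ·) atTop (𝓝 0) := by
  obtain ⟨r, hρr, hr1⟩ := ENNReal.lt_iff_exists_nnreal_btwn.1 ha
  have hle : ∀ᶠ k : ℕ in atTop, ‖a ^ k‖ ≤ (r : ℝ) ^ k := by
    filter_upwards [(spectrum.pow_nnnorm_pow_one_div_tendsto_nhds_spectralRadius a)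
      |>.eventually_le_const hρr, eventually_gt_atTop 0] with k hk hk0
    rw [one_div, ENNReal.rpow_inv_le_iff (by positivity), ENNReal.rpow_natCast] at hk
    exact_mod_cast hk
  exact squeeze_zero_norm' hle (tendsto_pow_atTop_nhds_zero_of_lt_one r.2 (mod_cast hr1))

namespace Matrix

variable {𝕜 : Type*} [RCLike 𝕜] {n : Type*} [Fintype n]

theorem posDef_fromBlocks₂₂_iff {m : Type*} [Fintype m] [DecidableEq m] [DecidableEq n]
    {A : Matrix m m 𝕜} (B : Matrix m n 𝕜) {D : Matrix n n 𝕜} (hD : D.PosDef) :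
    (fromBlocks A B Bᴴ D).PosDef ↔ (A - B * D⁻¹ * Bᴴ).PosDef := by
  have := hD.isUnit.invertible
  have hdet := det_fromBlocks₂₂ A B Bᴴ D
  rw [invOf_eq_nonsing_inv] at hdet
  constructor
  · intro h
    rw [((PosDef.fromBlocks₂₂ A B hD).1 h.posSemidef).posDef_iff_det_ne_zero]
    exact right_ne_zero_of_mul (hdet ▸ h.det_pos.ne')
  · intro h
    rw [((PosDef.fromBlocks₂₂ A B hD).2 h.posSemidef).posDef_iff_det_ne_zero, hdet]
    exact mul_ne_zero hD.det_pos.ne' h.det_pos.ne'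

theorem posDef_fromBlocks_lyapunov_iff [DecidableEq n] {P F : Matrix n n 𝕜} (hP : P.PosDef) :
    (fromBlocks P (Fᴴ * P) (P * F) P).PosDef ↔ (P - Fᴴ * P * F).PosDef := by
  have := hP.isUnit.invertible
  have hPF : (Fᴴ * P)ᴴ = P * F := by rw [conjTranspose_mul, conjTranspose_conjTranspose, hP.1.eq]
  rw [← hPF, posDef_fromBlocks₂₂_iff _ hP, hPF, Matrix.mul_assoc _ P⁻¹,
    inv_mul_cancel_left_of_invertible, Matrix.mul_assoc]

theorem norm_lt_one_of_posDef_lyapunov {P G : Matrix n n 𝕜} (hP : P.PosDef)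
    (hQ : (P - Gᴴ * P * G).PosDef) {v : n → 𝕜} (hv : v ≠ 0) {z : 𝕜} (hz : G *ᵥ v = z • v) :
    ‖z‖ < 1 := by
  have hq := hP.re_dotProduct_pos hv
  have hQv := hQ.re_dotProduct_pos hv
  have hGv : star v ⬝ᵥ ((Gᴴ * P * G) *ᵥ v) = ((‖z‖ ^ 2 : ℝ) : 𝕜) * (star v ⬝ᵥ (P *ᵥ v)) := by
    rw [← mulVec_mulVec, ← mulVec_mulVec, dotProduct_mulVec, ← star_mulVec, hz, star_smul,
      mulVec_smul, smul_dotProduct, dotProduct_smul, smul_eq_mul, smul_eq_mul, ← mul_assoc,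
      RCLike.star_def, RCLike.conj_mul, RCLike.ofReal_pow]
  rw [sub_mulVec, dotProduct_sub, hGv, map_sub, RCLike.re_ofReal_mul] at hQv
  have : ‖z‖ ^ 2 < 1 := by nlinarith
  nlinarith [norm_nonneg z]

theorem PosDef.map_ofReal_s18 {P : Matrix n n ℝ} (hP : P.PosDef) :
    (P.map ((↑) : ℝ → ℂ)).PosDef := by
  have hH : (P.map ((↑) : ℝ → ℂ)).IsHermitian :=
    hP.1.map _ fun x => (Complex.conj_ofReal x).symm
  refine .of_dotProduct_mulVec_pos hH fun v hv => Complex.pos_iff.2 ⟨?_, ?_⟩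
  · set x : n → ℝ := fun i => (v i).re
    set y : n → ℝ := fun i => (v i).im
    have hre : (star v ⬝ᵥ (P.map ((↑) : ℝ → ℂ) *ᵥ v)).re = x ⬝ᵥ (P *ᵥ x) + y ⬝ᵥ (P *ᵥ y) := by
      simp only [dotProduct, mulVec, Pi.star_apply, map_apply, Finset.mul_sum, Complex.re_sum,
        ← Finset.sum_add_distrib]
      refine Finset.sum_congr rfl fun i _ => Finset.sum_congr rfl fun j _ => ?_
      simp [x, y, Complex.mul_re, Complex.mul_im]
    have hnonneg (w : n → ℝ) : 0 ≤ w ⬝ᵥ (P *ᵥ w) := by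
      simpa using hP.posSemidef.dotProduct_mulVec_nonneg w
    have hpos {w : n → ℝ} (hw : w ≠ 0) : 0 < w ⬝ᵥ (P *ᵥ w) := by
      simpa using hP.dotProduct_mulVec_pos hw
    have hxy : x ≠ 0 ∨ y ≠ 0 := by
      by_contra! h
      exact hv (funext fun i => Complex.ext (congrFun h.1 i) (congrFun h.2 i))
    rw [hre]
    rcases hxy with h | h
    · linarith [hpos h, hnonneg y]
    · linarith [hpos h, hnonneg x]
  · exact (hH.im_star_dotProduct_mulVec_self v).symm

variable [DecidableEq n]

noncomputable def powGramian (F : Matrix n n 𝕜) (N : ℕ) : Matrix n n 𝕜 :=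
  ∑ k ∈ Finset.range N, (F ^ k)ᴴ * F ^ k

theorem conjTranspose_mul_powGramian_mul_add_one (F : Matrix n n 𝕜) (N : ℕ) :
    Fᴴ * powGramian F N * F + 1 = powGramian F N + (F ^ N)ᴴ * F ^ N := by
  rw [powGramian, ← Finset.sum_range_succ, Finset.sum_range_succ', Finset.mul_sum, Finset.sum_mul]
  simp [pow_succ, conjTranspose_mul, Matrix.mul_assoc]

theorem posDef_powGramian_succ (F : Matrix n n 𝕜) (N : ℕ) : (powGramian F (N + 1)).PosDef := by
  rw [powGramian, Finset.sum_range_succ', pow_zero, conjTranspose_one, Matrix.one_mul]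
  exact PosDef.posSemidef_add
    (posSemidef_sum _ fun k _ => posSemidef_conjTranspose_mul_self (F ^ (k + 1))) PosDef.one

section L2OpNorm

open scoped Matrix.Norms.L2Operator

theorem posDef_one_sub_conjTranspose_mul_self {B : Matrix n n 𝕜}
    (hB : ‖B‖ < 1) : (1 - Bᴴ * B).PosDef := by
  refine .of_dotProduct_mulVec_pos (isHermitian_one.sub (isHermitian_conjTranspose_mul_self B))
    fun x hx => ?_
  have hnorm (y : n → 𝕜) : star y ⬝ᵥ y = ((‖WithLp.toLp 2 y‖ ^ 2 : ℝ) : 𝕜) := by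
    rw [RCLike.ofReal_pow, ← inner_self_eq_norm_sq_to_K, EuclideanSpace.inner_eq_star_dotProduct,
      dotProduct_comm]
  have hBx : ‖WithLp.toLp 2 (B *ᵥ x)‖ < ‖WithLp.toLp 2 x‖ :=
    calc _ ≤ ‖B‖ * ‖WithLp.toLp 2 x‖ := l2_opNorm_mulVec B _
      _ < ‖WithLp.toLp 2 x‖ := mul_lt_of_lt_one_left (by simpa using hx) hB
  rw [sub_mulVec, one_mulVec, dotProduct_sub, ← mulVec_mulVec, dotProduct_mulVec, ← star_mulVec,
    hnorm, hnorm, ← RCLike.ofReal_sub, RCLike.ofReal_pos, sub_pos]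
  gcongr

theorem exists_posDef_lyapunov_of_tendsto_pow {F : Matrix n n 𝕜}
    (hF : Tendsto (F ^ ·) atTop (𝓝 0)) :
    ∃ P : Matrix n n 𝕜, P.PosDef ∧ (P - Fᴴ * P * F).PosDef := by
  have hsmall : ∀ᶠ k in atTop, ‖F ^ k‖ < 1 := hF.norm.eventually_lt_const (by simp)
  obtain ⟨N, hN⟩ := hsmall.exists_forall_of_atTop
  have hlyap : powGramian F (N + 1) - Fᴴ * powGramian F (N + 1) * F =
      1 - (F ^ (N + 1))ᴴ * F ^ (N + 1) :=
    sub_eq_sub_iff_add_eq_add.2 <|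
      (conjTranspose_mul_powGramian_mul_add_one F (N + 1)).symm.trans (add_comm _ _)
  exact ⟨_, posDef_powGramian_succ F N,
    hlyap ▸ posDef_one_sub_conjTranspose_mul_self (hN _ N.le_succ)⟩

end L2OpNorm

end Matrix

section IsSchur

variable {n : ℕ}

theorem isSchur_of_posDef_lyapunov {F P : Matrix (Fin n) (Fin n) ℝ} (hP : P.PosDef)
    (hQ : (P - Fᵀ * P * F).PosDef) : IsSchur F := by
  intro z hz
  set G := F.map ((↑) : ℝ → ℂ)
  have hz' : Module.End.HasEigenvalue (toLin' G) z := by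
    rw [Module.End.hasEigenvalue_iff_mem_spectrum, spectrum_toLin']
    exact mem_spectrum_iff_isRoot_charpoly.2 hz
  obtain ⟨v, hv⟩ := hz'.exists_hasEigenvector
  set Pc := P.map ((↑) : ℝ → ℂ)
  have hQ' : (Pc - Gᴴ * Pc * G).PosDef := by
    have : (P - Fᵀ * P * F).map ((↑) : ℝ → ℂ) = Pc - Gᴴ * Pc * G := by
      ext i j
      simp [G, Pc, mul_apply]
    exact this ▸ hQ.map_ofReal_s18
  exact norm_lt_one_of_posDef_lyapunov hP.map_ofReal_s18 hQ' hv.2 (by simpa using hv.apply_eq_smul)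

-- Any complete algebra norm on complex matrices would do; this one induces the product topology.
open scoped Matrix.Norms.L2Operator in
theorem IsSchur.tendsto_pow {F : Matrix (Fin n) (Fin n) ℝ} (hF : IsSchur F) :
    Tendsto (F ^ ·) atTop (𝓝 0) := by
  set G := F.map ((↑) : ℝ → ℂ)
  have hρ : spectralRadius ℂ G < 1 := by
    rcases (spectrum ℂ G).eq_empty_or_nonempty with h | h
    · simp [spectralRadius, h]
    · exact_mod_cast spectrum.spectralRadius_lt_of_forall_lt_of_nonempty h fun z hz => by
        simpa [← NNReal.coe_lt_coe] using hF z (mem_spectrum_iff_isRoot_charpoly.1 hz)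
  have hpow (k : ℕ) : (G ^ k).map Complex.re = F ^ k := by
    rw [show G ^ k = (F ^ k).map ((↑) : ℝ → ℂ) from (map_pow Complex.ofRealHom.mapMatrix F k).symm]
    simp [Function.comp_def]
  simpa [Function.comp_def, hpow] using
    ((continuous_id.matrix_map Complex.continuous_re).tendsto 0).comp
      (tendsto_pow_atTop_nhds_zero_of_spectralRadius_lt_one hρ)

theorem isSchur_iff_exists_posDef_lyapunov {F : Matrix (Fin n) (Fin n) ℝ} :
    IsSchur F ↔ ∃ P : Matrix (Fin n) (Fin n) ℝ, P.PosDef ∧ (P - Fᵀ * P * F).PosDef := by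
  refine ⟨fun hF => ?_, fun ⟨P, hP, hQ⟩ => isSchur_of_posDef_lyapunov hP hQ⟩
  simpa [conjTranspose_eq_transpose_of_trivial] using
    exists_posDef_lyapunov_of_tendsto_pow hF.tendsto_pow

end IsSchur

theorem posDef_observerLMI_iff {n m : ℕ} {A P : Matrix (Fin n) (Fin n) ℝ}
    {C : Matrix (Fin m) (Fin n) ℝ} {L : Matrix (Fin n) (Fin m) ℝ} (hP : P.PosDef) :
    (fromBlocks P (Aᵀ * P - Cᵀ * (P * L)ᵀ) (P * A - P * L * C) P).PosDef ↔
      (P - (A - L * C)ᵀ * P * (A - L * C)).PosDef := by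
  have hPt : Pᵀ = P := hP.1
  have e1 : Aᵀ * P - Cᵀ * (P * L)ᵀ = (A - L * C)ᴴ * P := by
    simp [conjTranspose_eq_transpose_of_trivial, transpose_mul, hPt, Matrix.sub_mul,
      Matrix.mul_assoc]
  rw [e1, Matrix.mul_assoc P L C, ← Matrix.mul_sub, posDef_fromBlocks_lyapunov_iff hP,
    conjTranspose_eq_transpose_of_trivial]

/-- Discrete-time Luenberger observer design LMI: `A − LC` is Schur stable iff
there are `P ≻ 0` (symmetric) and `K` with
`[[P, AᵀP − CᵀKᵀ], [PA − KC, P]] ≻ 0` and `L = P⁻¹K`. -/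
theorem stmt18 {n m : ℕ}
    (A : Matrix (Fin n) (Fin n) ℝ) (C : Matrix (Fin m) (Fin n) ℝ)
    (L : Matrix (Fin n) (Fin m) ℝ) :
    IsSchur (A - L * C) ↔
      ∃ (P : Matrix (Fin n) (Fin n) ℝ) (K : Matrix (Fin n) (Fin m) ℝ),
        P.PosDef ∧
        (Matrix.fromBlocks P (Aᵀ * P - Cᵀ * Kᵀ) (P * A - K * C) P).PosDef ∧
        L = P⁻¹ * K := by
  rw [isSchur_iff_exists_posDef_lyapunov]
  constructor
  · rintro ⟨P, hP, hQ⟩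
    exact ⟨P, P * L, hP, (posDef_observerLMI_iff hP).2 hQ,
      (nonsing_inv_mul_cancel_left _ _ hP.det_pos.ne'.isUnit).symm⟩
  · rintro ⟨P, K, hP, hLMI, hL⟩
    obtain rfl : K = P * L := by rw [hL, mul_nonsing_inv_cancel_left _ _ hP.det_pos.ne'.isUnit]
    exact ⟨P, hP, (posDef_observerLMI_iff hP).1 hLMI⟩
end
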